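/- arXiv:0912.4367 — 7 statements merged into one kernel-verified Lean document; each statement's English description precedes it below -/
import Mathlib

section
/- Let S₁ and S₂ be nonempty closed convex subsets of ℝ^N with S₁ ∩ S₂ ≠ ∅, and let P₁, P₂ denote the metric projections onto S₁ and S₂ respectively. Then the fixed-point set of the composition P₁ ∘ P₂ equals S₁ ∩ S₂; that is, for every x ∈ ℝ^N, P₁(P₂ x) = x if and only if x ∈ S₁ ∩ S₂. -/
open RealInnerProductSpace

/-- Obtuse angle inequality: if `v ∈ S` minimizes distance to `u` over convex `S`,
then for all `z ∈ S`, `dist u v ^ 2 + dist v z ^ 2 ≤ dist u z ^ 2`. -/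
lemma proj_sq_ineq {N : ℕ} {S : Set (EuclideanSpace ℝ (Fin N))} (hv : Convex ℝ S)
    {u v : EuclideanSpace ℝ (Fin N)} (hvS : v ∈ S)
    (hmin : ∀ y ∈ S, dist u v ≤ dist u y) {z : EuclideanSpace ℝ (Fin N)} (hz : z ∈ S) :
    dist u v ^ 2 + dist v z ^ 2 ≤ dist u z ^ 2 := by
  haveI : Nonempty S := ⟨⟨v, hvS⟩⟩
  have hinf : ‖u - v‖ = ⨅ w : S, ‖u - w‖ := by
    refine le_antisymm (le_ciInf fun w => ?_) ?_
    · simpa [dist_eq_norm] using hmin w w.2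
    · exact ciInf_le ⟨0, fun r ⟨w, hw⟩ => hw ▸ norm_nonneg _⟩ (⟨v, hvS⟩ : S)
  have key : ∀ w ∈ S, ⟪u - v, w - v⟫ ≤ 0 :=
    (norm_eq_iInf_iff_real_inner_le_zero hv hvS).mp hinf
  have h := key z hz
  have expand : ‖u - z‖ ^ 2 = ‖u - v‖ ^ 2 - 2 * ⟪u - v, z - v⟫ + ‖z - v‖ ^ 2 := by
    have : u - z = (u - v) - (z - v) := by abel
    rw [this, norm_sub_pow_two_real]
  have hdist : dist u z ^ 2 = dist u v ^ 2 - 2 * ⟪u - v, z - v⟫ + dist v z ^ 2 := by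
    simp only [dist_eq_norm, expand]
    rw [show ‖v - z‖ = ‖z - v‖ from norm_sub_rev _ _]
  linarith

/-- For nonempty closed convex sets `S₁, S₂ ⊆ ℝ^N` with `S₁ ∩ S₂ ≠ ∅` and metric
projections `P₁, P₂`, the fixed-point set of `P₁ ∘ P₂` is exactly `S₁ ∩ S₂`. -/
theorem stmt_3 (N : ℕ) (S₁ S₂ : Set (EuclideanSpace ℝ (Fin N)))
    (h₁c : IsClosed S₁) (h₁v : Convex ℝ S₁) (h₁n : S₁.Nonempty)
    (h₂c : IsClosed S₂) (h₂v : Convex ℝ S₂) (h₂n : S₂.Nonempty)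
    (hI : (S₁ ∩ S₂).Nonempty)
    (P₁ P₂ : EuclideanSpace ℝ (Fin N) → EuclideanSpace ℝ (Fin N))
    (hP₁ : ∀ x, P₁ x ∈ S₁ ∧ ∀ y ∈ S₁, dist x (P₁ x) ≤ dist x y)
    (hP₂ : ∀ x, P₂ x ∈ S₂ ∧ ∀ y ∈ S₂, dist x (P₂ x) ≤ dist x y) :
    ∀ x : EuclideanSpace ℝ (Fin N), P₁ (P₂ x) = x ↔ x ∈ S₁ ∩ S₂ := by
  intro x
  constructor
  · intro hfix
    obtain ⟨z, hz₁, hz₂⟩ := hI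
    set y := P₂ x with hy
    have hA := proj_sq_ineq h₂v (hP₂ x).1 (hP₂ x).2 hz₂
    have hB := proj_sq_ineq h₁v (hP₁ y).1 (hP₁ y).2 hz₁
    rw [hfix] at hB
    have hxy : dist x y = 0 := by
      have h1 : dist y x = dist x y := dist_comm _ _
      nlinarith [dist_nonneg (x := x) (y := y)]
    have hxy' : x = y := by rwa [dist_eq_zero] at hxy
    have hx₂ : x ∈ S₂ := hxy' ▸ (hP₂ x).1
    have hx₁ : x ∈ S₁ := hfix ▸ (hP₁ y).1
    exact ⟨hx₁, hx₂⟩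
  · rintro ⟨hx₁, hx₂⟩
    have h2 : P₂ x = x := by
      have := (hP₂ x).2 x hx₂
      simp only [dist_self] at this
      have := le_antisymm this dist_nonneg
      rw [dist_eq_zero] at this; exact this.symm
    rw [h2]
    have := (hP₁ x).2 x hx₁
    simp only [dist_self] at this
    have := le_antisymm this dist_nonneg
    rw [dist_eq_zero] at this; exact this.symm
end

section
/- Let S₁ and S₂ be nonempty closed convex subsets of ℝ^N with S₁ ∩ S₂ ≠ ∅, and let P₁, P₂ denote the metric projections onto S₁ and S₂ respectively. Then for every x ∈ ℝ^N, (P₁ x + P₂ x)/2 = x if and only if x ∈ S₁ ∩ S₂. -/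
open RealInnerProductSpace

lemma proj_var_ineq {E : Type*} [NormedAddCommGroup E] [InnerProductSpace ℝ E]
    {K : Set E} (hK : Convex ℝ K) {x p : E} (hp : p ∈ K)
    (hmin : ∀ y ∈ K, dist x p ≤ dist x y) :
    ∀ w ∈ K, ⟪x - p, w - p⟫ ≤ 0 := by
  have hne : Nonempty K := ⟨⟨p, hp⟩⟩
  have heq : ‖x - p‖ = ⨅ w : K, ‖x - w‖ := by
    apply le_antisymm
    · exact le_ciInf fun w => by
        simpa [dist_eq_norm] using hmin w w.2
    · exact ciInf_le ⟨0, fun _ ⟨_, h⟩ => h ▸ norm_nonneg _⟩ (⟨p, hp⟩ : K)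
  exact (norm_eq_iInf_iff_real_inner_le_zero hK hp).mp heq

/-- For nonempty closed convex sets `S₁, S₂ ⊆ ℝ^N` with `S₁ ∩ S₂ ≠ ∅` and metric
projections `P₁, P₂`: `(P₁ x + P₂ x)/2 = x` if and only if `x ∈ S₁ ∩ S₂`. -/
theorem stmt_4 (N : ℕ) (S₁ S₂ : Set (EuclideanSpace ℝ (Fin N)))
    (h₁c : IsClosed S₁) (h₁v : Convex ℝ S₁) (h₁n : S₁.Nonempty)
    (h₂c : IsClosed S₂) (h₂v : Convex ℝ S₂) (h₂n : S₂.Nonempty)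
    (hI : (S₁ ∩ S₂).Nonempty)
    (P₁ P₂ : EuclideanSpace ℝ (Fin N) → EuclideanSpace ℝ (Fin N))
    (hP₁ : ∀ x, P₁ x ∈ S₁ ∧ ∀ y ∈ S₁, dist x (P₁ x) ≤ dist x y)
    (hP₂ : ∀ x, P₂ x ∈ S₂ ∧ ∀ y ∈ S₂, dist x (P₂ x) ≤ dist x y) :
    ∀ x : EuclideanSpace ℝ (Fin N), ((1 : ℝ) / 2) • (P₁ x + P₂ x) = x ↔ x ∈ S₁ ∩ S₂ := by
  intro x
  constructor
  · intro hmid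
    obtain ⟨z, hz₁, hz₂⟩ := hI
    have hv₁ := proj_var_ineq h₁v (hP₁ x).1 (hP₁ x).2 z hz₁
    have hv₂ := proj_var_ineq h₂v (hP₂ x).1 (hP₂ x).2 z hz₂
    -- x - P₁ x = (1/2)(P₂ x - P₁ x), x - P₂ x = (1/2)(P₁ x - P₂ x)
    have h1 : x - P₁ x = ((1:ℝ)/2) • (P₂ x - P₁ x) := by
      linear_combination (norm := module) -hmid
    have h2 : x - P₂ x = -(((1:ℝ)/2) • (P₂ x - P₁ x)) := by
      linear_combination (norm := module) -hmid
    set u := P₂ x - P₁ x with hu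
    rw [h1, real_inner_smul_left] at hv₁
    rw [h2, inner_neg_left, real_inner_smul_left] at hv₂
    have hv₁' : ⟪u, z - P₁ x⟫ ≤ 0 := by linarith
    have hv₂' : 0 ≤ ⟪u, z - P₂ x⟫ := by linarith
    have hdiff : ⟪u, u⟫ ≤ 0 := by
      have : ⟪u, z - P₁ x⟫ - ⟪u, z - P₂ x⟫ = ⟪u, u⟫ := by
        rw [← inner_sub_right]; congr 1; rw [hu]; abel
      linarith
    have hu0 : u = 0 := by
      have := real_inner_self_nonneg (x := u)
      exact inner_self_eq_zero.mp (le_antisymm hdiff this)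
    have hP12 : P₂ x = P₁ x := by
      have := sub_eq_zero.mp hu0; exact this
    have hx1 : x = P₁ x := by
      have := hP12
      linear_combination (norm := module) -hmid + ((1:ℝ)/2) • this
    constructor
    · rw [hx1]; exact (hP₁ x).1
    · rw [hx1, ← hP12]; exact (hP₂ x).1
  · rintro ⟨hx1, hx2⟩
    have e1 : P₁ x = x := by
      have := (hP₁ x).2 x hx1
      simp only [dist_self] at this
      have : dist x (P₁ x) = 0 := le_antisymm this dist_nonneg
      exact (dist_eq_zero.mp this).symm
    have e2 : P₂ x = x := by
      have := (hP₂ x).2 x hx2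
      simp only [dist_self] at this
      have : dist x (P₂ x) = 0 := le_antisymm this dist_nonneg
      exact (dist_eq_zero.mp this).symm
    rw [e1, e2]; module
end

section
/- (Convergence of POCS, alternating projections.) Let S₁ and S₂ be nonempty closed convex subsets of ℝ^N with S₁ ∩ S₂ ≠ ∅, and let P₁, P₂ denote the metric projections onto S₁ and S₂. Let x⁽⁰⁾ ∈ ℝ^N be arbitrary and define x⁽ⁿ⁺¹⁾ = P₁(P₂ x⁽ⁿ⁾) for all n ∈ ℕ. Then the sequence (x⁽ⁿ⁾) converges to a point of S₁ ∩ S₂. -/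
open RealInnerProductSpace Filter Topology

lemma pocs_proj_key {E : Type*} [NormedAddCommGroup E] [InnerProductSpace ℝ E]
    {S : Set E} (hv : Convex ℝ S) (hn : S.Nonempty)
    {P : E → E} (hP : ∀ x, P x ∈ S ∧ ∀ y ∈ S, dist x (P x) ≤ dist x y)
    (x : E) {z : E} (hz : z ∈ S) :
    ‖P x - z‖^2 + ‖x - P x‖^2 ≤ ‖x - z‖^2 := by
  haveI := hn.to_subtype
  obtain ⟨hmem, hmin⟩ := hP x
  have hinf : ‖x - P x‖ = ⨅ w : S, ‖x - w‖ := by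
    refine le_antisymm (le_ciInf fun w => ?_) ?_
    · simpa [dist_eq_norm] using hmin w w.2
    · exact ciInf_le ⟨0, fun a ha => by obtain ⟨w, rfl⟩ := ha; positivity⟩ (⟨P x, hmem⟩ : S)
  have hip := (norm_eq_iInf_iff_real_inner_le_zero hv hmem).mp hinf z hz
  have expand : ‖x - z‖^2 = ‖x - P x‖^2 + 2 * ⟪x - P x, P x - z⟫ + ‖P x - z‖^2 := by
    have h : x - z = (x - P x) + (P x - z) := by abel
    rw [h, norm_add_sq_real]
  have h2 : ⟪x - P x, P x - z⟫ = - ⟪x - P x, z - P x⟫ := by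
    rw [← inner_neg_right]; congr 1; abel
  nlinarith [hip]

/-- Convergence of POCS (unrelaxed alternating projections): for nonempty closed convex
sets `S₁, S₂ ⊆ ℝ^N` with nonempty intersection, the sequence `x⁽ⁿ⁺¹⁾ = P₁ (P₂ x⁽ⁿ⁾)`
converges to a point of `S₁ ∩ S₂`. -/
theorem stmt_5 (N : ℕ) (S₁ S₂ : Set (EuclideanSpace ℝ (Fin N)))
    (h₁c : IsClosed S₁) (h₁v : Convex ℝ S₁) (h₁n : S₁.Nonempty)
    (h₂c : IsClosed S₂) (h₂v : Convex ℝ S₂) (h₂n : S₂.Nonempty)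
    (hI : (S₁ ∩ S₂).Nonempty)
    (P₁ P₂ : EuclideanSpace ℝ (Fin N) → EuclideanSpace ℝ (Fin N))
    (hP₁ : ∀ x, P₁ x ∈ S₁ ∧ ∀ y ∈ S₁, dist x (P₁ x) ≤ dist x y)
    (hP₂ : ∀ x, P₂ x ∈ S₂ ∧ ∀ y ∈ S₂, dist x (P₂ x) ≤ dist x y)
    (x : ℕ → EuclideanSpace ℝ (Fin N))
    (hrec : ∀ n : ℕ, x (n + 1) = P₁ (P₂ (x n))) :
    ∃ z ∈ S₁ ∩ S₂, Filter.Tendsto x Filter.atTop (nhds z) := by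
  set q : ℕ → EuclideanSpace ℝ (Fin N) := fun n => P₂ (x n) with hq
  -- master inequality for any z in the intersection
  have key : ∀ z ∈ S₁ ∩ S₂, ∀ n,
      ‖x (n+1) - z‖^2 + ‖x n - q n‖^2 + ‖q n - x (n+1)‖^2 ≤ ‖x n - z‖^2 := by
    rintro z ⟨hz₁, hz₂⟩ n
    have k2 := pocs_proj_key h₂v h₂n hP₂ (x n) hz₂
    have k1 := pocs_proj_key h₁v h₁n hP₁ (q n) hz₁
    rw [← hrec n] at k1
    linarith
  -- norm antitonicity
  have dec : ∀ z ∈ S₁ ∩ S₂, ∀ n, ‖x (n+1) - z‖ ≤ ‖x n - z‖ := by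
    intro z hz n
    have := key z hz n
    nlinarith [norm_nonneg (x n - q n), norm_nonneg (q n - x (n+1)),
      norm_nonneg (x (n+1) - z), norm_nonneg (x n - z)]
  have dec' : ∀ z ∈ S₁ ∩ S₂, Antitone fun n => ‖x n - z‖ :=
    fun z hz => antitone_nat_of_succ_le (fun n => dec z hz n)
  obtain ⟨z, hz⟩ := hI
  -- f n = ‖x n - z‖² converges
  set f : ℕ → ℝ := fun n => ‖x n - z‖^2 with hf
  have fant : Antitone f := by
    intro m n h
    have := (dec' z hz) h
    dsimp [f]
    nlinarith [norm_nonneg (x n - z), norm_nonneg (x m - z)]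
  have ftend : Tendsto f atTop (𝓝 (⨅ n, f n)) :=
    tendsto_atTop_ciInf fant ⟨0, by rintro a ⟨n, rfl⟩; positivity⟩
  have fdiff : Tendsto (fun n => f n - f (n+1)) atTop (𝓝 0) := by
    have := ftend.sub (ftend.comp (tendsto_add_atTop_nat 1))
    simpa using this
  -- the two gap terms go to 0
  have gap1 : Tendsto (fun n => ‖x n - q n‖^2) atTop (𝓝 0) := by
    refine squeeze_zero (fun n => by positivity) (fun n => ?_) fdiff
    have := key z hz n
    have h2 := sq_nonneg ‖q n - x (n+1)‖
    dsimp [f]; nlinarith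
  have gap1' : Tendsto (fun n => ‖x n - q n‖) atTop (𝓝 0) := by
    have := gap1.sqrt
    simpa [Real.sqrt_sq (norm_nonneg _)] using this
  have gapv : Tendsto (fun n => q n - x n) atTop (𝓝 0) := by
    rw [tendsto_zero_iff_norm_tendsto_zero]
    simpa [norm_sub_rev] using gap1'
  -- boundedness and compact subsequence
  have hball : ∀ n, x n ∈ Metric.closedBall z ‖x 0 - z‖ := by
    intro n
    simpa [Metric.mem_closedBall, dist_eq_norm] using (dec' z hz) (Nat.zero_le n)
  obtain ⟨w, -, φ, hφ, hwt⟩ :=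
    (isCompact_closedBall z ‖x 0 - z‖).tendsto_subseq hball
  -- w ∈ S₁
  have hxS₁ : ∀ n, 1 ≤ n → x n ∈ S₁ := by
    rintro (_ | n) h
    · omega
    · rw [hrec n]; exact (hP₁ _).1
  have hwS₁ : w ∈ S₁ := by
    refine h₁c.mem_of_tendsto hwt ?_
    filter_upwards [eventually_ge_atTop 1] with k hk
    exact hxS₁ (φ k) (le_trans hk (hφ.le_apply))
  -- q ∘ φ → w, so w ∈ S₂
  have hqt : Tendsto (fun k => q (φ k)) atTop (𝓝 w) := by
    have h0 : Tendsto (fun k => q (φ k) - x (φ k)) atTop (𝓝 0) :=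
      gapv.comp hφ.tendsto_atTop
    have := h0.add hwt
    simpa using this
  have hwS₂ : w ∈ S₂ := h₂c.mem_of_tendsto hqt (Eventually.of_forall fun k => (hP₂ _).1)
  have hwI : w ∈ S₁ ∩ S₂ := ⟨hwS₁, hwS₂⟩
  -- Fejér: full convergence to w
  refine ⟨w, hwI, ?_⟩
  set g : ℕ → ℝ := fun n => ‖x n - w‖ with hg
  have gant : Antitone g := dec' w hwI
  have gtend : Tendsto g atTop (𝓝 (⨅ n, g n)) :=
    tendsto_atTop_ciInf gant ⟨0, by rintro a ⟨n, rfl⟩; positivity⟩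
  have gsub : Tendsto (fun k => g (φ k)) atTop (𝓝 0) := by
    have : Tendsto (fun k => x (φ k) - w) atTop (𝓝 0) := by
      have := hwt.sub (tendsto_const_nhds (x := w))
      simpa using this
    exact (tendsto_zero_iff_norm_tendsto_zero.mp this)
  have hinf0 : (⨅ n, g n) = 0 :=
    tendsto_nhds_unique (gtend.comp hφ.tendsto_atTop) gsub
  rw [tendsto_iff_dist_tendsto_zero]
  simpa [dist_eq_norm, ← hinf0] using gtend
end

section
/- (Convergence of PPM, the parallel projection method.) Let S₁ and S₂ be nonempty closed convex subsets of ℝ^N with S₁ ∩ S₂ ≠ ∅, and let P₁, P₂ denote the metric projections onto S₁ and S₂. Let x⁽⁰⁾ ∈ ℝ^N be arbitrary and define x⁽ⁿ⁺¹⁾ = (P₁ x⁽ⁿ⁾ + P₂ x⁽ⁿ⁾)/2 for all n ∈ ℕ. Then the sequence (x⁽ⁿ⁾) converges to a point of S₁ ∩ S₂. -/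
open Filter
open scoped RealInnerProductSpace

section aux

variable {E : Type*} [NormedAddCommGroup E] [InnerProductSpace ℝ E]

lemma aux_var {S : Set E} (hv : Convex ℝ S) {u p : E} (hp : p ∈ S)
    (hmin : ∀ y ∈ S, dist u p ≤ dist u y) :
    ∀ w ∈ S, ⟪u - p, w - p⟫ ≤ 0 := by
  haveI : Nonempty S := ⟨⟨p, hp⟩⟩
  have h : ‖u - p‖ = ⨅ w : S, ‖u - w‖ := by
    apply le_antisymm
    · exact le_ciInf fun w => by simpa [dist_eq_norm] using hmin w w.2
    · have hbd : BddBelow (Set.range fun w : S => ‖u - (w : E)‖) :=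
        ⟨0, by rintro b ⟨w, rfl⟩; exact norm_nonneg _⟩
      exact ciInf_le hbd ⟨p, hp⟩
  exact (norm_eq_iInf_iff_real_inner_le_zero hv hp).1 h

lemma aux_firm {u p z : E} (hvar : ⟪u - p, z - p⟫ ≤ 0) :
    ‖p - z‖ ^ 2 + ‖u - p‖ ^ 2 ≤ ‖u - z‖ ^ 2 := by
  have hd : u - z = (u - p) + (p - z) := by abel
  have h2 : ⟪u - p, p - z⟫ = -⟪u - p, z - p⟫ := by
    rw [show p - z = -(z - p) by abel, inner_neg_right]
  rw [hd, norm_add_sq_real]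
  nlinarith

lemma aux_avg (a b z : E) :
    ‖((1 : ℝ) / 2) • (a + b) - z‖ ^ 2 ≤ (‖a - z‖ ^ 2 + ‖b - z‖ ^ 2) / 2 := by
  have h : ((1 : ℝ) / 2) • (a + b) - z = ((1 : ℝ) / 2) • ((a - z) + (b - z)) := by
    rw [smul_add, smul_add, smul_sub, smul_sub]
    module
  rw [h, norm_smul]
  have h1 : ‖(a - z) + (b - z)‖ ≤ ‖a - z‖ + ‖b - z‖ := norm_add_le _ _
  have h2 : (0 : ℝ) ≤ ‖(a - z) + (b - z)‖ := norm_nonneg _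
  have h3 : (0 : ℝ) ≤ ‖a - z‖ := norm_nonneg _
  have h4 : (0 : ℝ) ≤ ‖b - z‖ := norm_nonneg _
  have : ‖((1:ℝ)/2)‖ = (1:ℝ)/2 := by norm_num [Real.norm_eq_abs]
  rw [this]
  nlinarith [sq_nonneg (‖a - z‖ - ‖b - z‖)]

end aux

/-- Convergence of PPM (parallel projection method): for nonempty closed convex
sets `S₁, S₂ ⊆ ℝ^N` with nonempty intersection, the sequence
`x⁽ⁿ⁺¹⁾ = (P₁ x⁽ⁿ⁾ + P₂ x⁽ⁿ⁾)/2` converges to a point of `S₁ ∩ S₂`. -/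
theorem stmt_6 (N : ℕ) (S₁ S₂ : Set (EuclideanSpace ℝ (Fin N)))
    (h₁c : IsClosed S₁) (h₁v : Convex ℝ S₁) (h₁n : S₁.Nonempty)
    (h₂c : IsClosed S₂) (h₂v : Convex ℝ S₂) (h₂n : S₂.Nonempty)
    (hI : (S₁ ∩ S₂).Nonempty)
    (P₁ P₂ : EuclideanSpace ℝ (Fin N) → EuclideanSpace ℝ (Fin N))
    (hP₁ : ∀ x, P₁ x ∈ S₁ ∧ ∀ y ∈ S₁, dist x (P₁ x) ≤ dist x y)
    (hP₂ : ∀ x, P₂ x ∈ S₂ ∧ ∀ y ∈ S₂, dist x (P₂ x) ≤ dist x y)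
    (x : ℕ → EuclideanSpace ℝ (Fin N))
    (hrec : ∀ n : ℕ, x (n + 1) = ((1 : ℝ) / 2) • (P₁ (x n) + P₂ (x n))) :
    ∃ z ∈ S₁ ∩ S₂, Filter.Tendsto x Filter.atTop (nhds z) := by
  obtain ⟨z₀, hz₀⟩ := hI
  set d₁ : ℕ → ℝ := fun n => ‖x n - P₁ (x n)‖ with hd₁
  set d₂ : ℕ → ℝ := fun n => ‖x n - P₂ (x n)‖ with hd₂
  -- main decreasing inequality
  have main : ∀ z ∈ S₁ ∩ S₂, ∀ n,
      ‖x (n + 1) - z‖ ^ 2 + (d₁ n ^ 2 + d₂ n ^ 2) / 2 ≤ ‖x n - z‖ ^ 2 := by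
    rintro z ⟨hz1, hz2⟩ n
    have f1 : ‖P₁ (x n) - z‖ ^ 2 + d₁ n ^ 2 ≤ ‖x n - z‖ ^ 2 :=
      aux_firm (aux_var h₁v (hP₁ (x n)).1 (hP₁ (x n)).2 z hz1)
    have f2 : ‖P₂ (x n) - z‖ ^ 2 + d₂ n ^ 2 ≤ ‖x n - z‖ ^ 2 :=
      aux_firm (aux_var h₂v (hP₂ (x n)).1 (hP₂ (x n)).2 z hz2)
    have favg := aux_avg (P₁ (x n)) (P₂ (x n)) z
    rw [hrec n]
    linarith
  -- the squared distances to z₀ are antitone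
  have amono : Antitone fun n => ‖x n - z₀‖ ^ 2 := by
    apply antitone_nat_of_succ_le
    intro n
    have := main z₀ hz₀ n
    nlinarith [sq_nonneg (d₁ n), sq_nonneg (d₂ n)]
  have anonneg : ∀ n, (0 : ℝ) ≤ ‖x n - z₀‖ ^ 2 := fun n => sq_nonneg _
  -- convergence of a
  have abdd : BddBelow (Set.range fun n => ‖x n - z₀‖ ^ 2) :=
    ⟨0, by rintro b ⟨n, rfl⟩; exact anonneg n⟩
  have atend : Tendsto (fun n => ‖x n - z₀‖ ^ 2) atTop
      (nhds (⨅ n, ‖x n - z₀‖ ^ 2)) := tendsto_atTop_ciInf amono abdd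
  -- d₁² + d₂² → 0
  have hdsum : Tendsto (fun n => d₁ n ^ 2 + d₂ n ^ 2) atTop (nhds 0) := by
    have hdiff : Tendsto (fun n => ‖x n - z₀‖ ^ 2 - ‖x (n + 1) - z₀‖ ^ 2) atTop (nhds 0) := by
      have h2 := (atend.comp (tendsto_add_atTop_nat 1))
      simpa using atend.sub h2
    apply squeeze_zero (fun n => by positivity)
      (fun n => ?_) (by simpa using hdiff.const_mul 2)
    have := main z₀ hz₀ n
    linarith
  have hd1 : Tendsto d₁ atTop (nhds 0) := by
    apply squeeze_zero (fun n => norm_nonneg _) (fun n => ?_)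
      (by simpa using hdsum.sqrt)
    calc d₁ n = Real.sqrt (d₁ n ^ 2) := (Real.sqrt_sq (norm_nonneg _)).symm
      _ ≤ Real.sqrt (d₁ n ^ 2 + d₂ n ^ 2) := Real.sqrt_le_sqrt (by nlinarith [sq_nonneg (d₂ n)])
  have hd2 : Tendsto d₂ atTop (nhds 0) := by
    apply squeeze_zero (fun n => norm_nonneg _) (fun n => ?_)
      (by simpa using hdsum.sqrt)
    calc d₂ n = Real.sqrt (d₂ n ^ 2) := (Real.sqrt_sq (norm_nonneg _)).symm
      _ ≤ Real.sqrt (d₁ n ^ 2 + d₂ n ^ 2) := Real.sqrt_le_sqrt (by nlinarith [sq_nonneg (d₁ n)])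
  -- boundedness and convergent subsequence
  have hball : ∀ n, x n ∈ Metric.closedBall z₀ ‖x 0 - z₀‖ := by
    intro n
    rw [Metric.mem_closedBall, dist_eq_norm]
    have h := amono (Nat.zero_le n)
    calc ‖x n - z₀‖ = Real.sqrt (‖x n - z₀‖ ^ 2) := (Real.sqrt_sq (norm_nonneg _)).symm
      _ ≤ Real.sqrt (‖x 0 - z₀‖ ^ 2) := Real.sqrt_le_sqrt h
      _ = ‖x 0 - z₀‖ := Real.sqrt_sq (norm_nonneg _)
  obtain ⟨w, -, φ, hφ, hwt⟩ :=
    (isCompact_closedBall z₀ ‖x 0 - z₀‖).tendsto_subseq hball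
  -- w ∈ S₁ ∩ S₂
  have hsub : ∀ (P : EuclideanSpace ℝ (Fin N) → EuclideanSpace ℝ (Fin N)) (d : ℕ → ℝ),
      (∀ n, d n = ‖x n - P (x n)‖) → Tendsto d atTop (nhds 0) →
      Tendsto (fun k => P (x (φ k))) atTop (nhds w) := by
    intro P d hdef hd
    have h1 : Tendsto (fun k => x (φ k) - P (x (φ k))) atTop (nhds 0) := by
      rw [tendsto_zero_iff_norm_tendsto_zero]
      have := hd.comp hφ.tendsto_atTop
      simpa [Function.comp_def, hdef] using this
    have := hwt.sub h1
    simpa using this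
  have hw1 : w ∈ S₁ :=
    h₁c.mem_of_tendsto (hsub P₁ d₁ (fun n => rfl) hd1)
      (Filter.Eventually.of_forall fun k => (hP₁ _).1)
  have hw2 : w ∈ S₂ :=
    h₂c.mem_of_tendsto (hsub P₂ d₂ (fun n => rfl) hd2)
      (Filter.Eventually.of_forall fun k => (hP₂ _).1)
  refine ⟨w, ⟨hw1, hw2⟩, ?_⟩
  -- Fejér monotonicity w.r.t. w gives full convergence
  have bmono : Antitone fun n => ‖x n - w‖ ^ 2 := by
    apply antitone_nat_of_succ_le
    intro n
    have := main w ⟨hw1, hw2⟩ n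
    nlinarith [sq_nonneg (d₁ n), sq_nonneg (d₂ n)]
  have bbdd : BddBelow (Set.range fun n => ‖x n - w‖ ^ 2) :=
    ⟨0, by rintro b ⟨n, rfl⟩; exact sq_nonneg _⟩
  have btend : Tendsto (fun n => ‖x n - w‖ ^ 2) atTop
      (nhds (⨅ n, ‖x n - w‖ ^ 2)) := tendsto_atTop_ciInf bmono bbdd
  have bsub : Tendsto (fun k => ‖x (φ k) - w‖ ^ 2) atTop (nhds 0) := by
    have : Tendsto (fun k => x (φ k) - w) atTop (nhds 0) := by
      have hc : Tendsto (fun _ : ℕ => w) atTop (nhds w) := tendsto_const_nhds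
      simpa using hwt.sub hc
    have hn := (continuous_norm.tendsto _).comp this
    simpa using (hn.pow 2)
  have hcomp : Tendsto (fun k => ‖x (φ k) - w‖ ^ 2) atTop
      (nhds (⨅ n, ‖x n - w‖ ^ 2)) := btend.comp hφ.tendsto_atTop
  have hinf : (⨅ n, ‖x n - w‖ ^ 2) = 0 := tendsto_nhds_unique hcomp bsub
  rw [hinf] at btend
  have hnorm : Tendsto (fun n => ‖x n - w‖) atTop (nhds 0) := by
    apply squeeze_zero (fun n => norm_nonneg _) (fun n => ?_)
      (by simpa using btend.sqrt)
    exact le_rfl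
  rw [tendsto_iff_norm_sub_tendsto_zero]
  exact hnorm
end

section
/- (Convergence of EAPM, the extrapolated alternating projection method.) Let S₁ ⊆ ℝ^N be a nonempty closed affine subspace and S₂ ⊆ ℝ^N a nonempty closed convex set with S₁ ∩ S₂ ≠ ∅, and let P₁, P₂ denote the metric projections onto S₁ and S₂. Fix ρ with 0 < ρ < 2, let x⁽⁰⁾ ∈ S₁, and define for all n ∈ ℕ: x⁽ⁿ⁺¹⁾ = x⁽ⁿ⁾ + ρ Kₙ (P₁ P₂ x⁽ⁿ⁾ − x⁽ⁿ⁾), where Kₙ = ‖P₂ x⁽ⁿ⁾ − x⁽ⁿ⁾‖² / ‖P₁ P₂ x⁽ⁿ⁾ − x⁽ⁿ⁾‖² if x⁽ⁿ⁾ ∉ S₂, and Kₙ = 1 if x⁽ⁿ⁾ ∈ S₂. Assume that for every n with x⁽ⁿ⁾ ∉ S₂ one has P₁ P₂ x⁽ⁿ⁾ ≠ x⁽ⁿ⁾ (so Kₙ is well defined). Then the sequence (x⁽ⁿ⁾) converges to a point of S₁ ∩ S₂. -/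
/-!
Every point `z` of `S₁ ∩ S₂` satisfies the Fejér inequality
`‖x⁽ⁿ⁺¹⁾ - z‖² + ρ(2 - ρ)‖P₂ x⁽ⁿ⁾ - x⁽ⁿ⁾‖² ≤ ‖x⁽ⁿ⁾ - z‖²`: since `S₁` is affine, `P₁` is an
orthogonal projection, which gives `‖P₁ P₂ x - x‖² ≤ ‖P₂ x - x‖² ≤ ⟪z - x, P₁ P₂ x - x⟫`, and the
extrapolation factor `Kₙ ≥ 1` is exactly the step length that makes the quadratic in the step
come out as above. Hence the iterates are bounded, `‖P₂ x⁽ⁿ⁾ - x⁽ⁿ⁾‖²` is summable, and every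
cluster point lies in `S₁ ∩ S₂`; a Fejér monotone sequence with a cluster point in the target set
converges to it.
-/

open RealInnerProductSpace Filter Topology

section Fejer

variable {X : Type*} [PseudoMetricSpace X]

def FejerMonotone (x : ℕ → X) (F : Set X) : Prop :=
  ∀ z ∈ F, Antitone fun n => dist (x n) z

theorem tendsto_of_antitone_dist_of_tendsto_comp {x : ℕ → X} {p : X} {φ : ℕ → ℕ}
    (hanti : Antitone fun n => dist (x n) p) (hp : Tendsto (x ∘ φ) atTop (𝓝 p)) :
    Tendsto x atTop (𝓝 p) := by
  refine Metric.tendsto_atTop.2 fun ε hε => ?_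
  obtain ⟨k, hk⟩ := Metric.tendsto_atTop.1 hp ε hε
  exact ⟨φ k, fun n hn => (hanti hn).trans_lt (hk k le_rfl)⟩

theorem FejerMonotone.exists_tendsto [ProperSpace X] {x : ℕ → X} {F : Set X}
    (hx : FejerMonotone x F) (hF : F.Nonempty)
    (hcluster : ∀ p (φ : ℕ → ℕ), StrictMono φ → Tendsto (x ∘ φ) atTop (𝓝 p) → p ∈ F) :
    ∃ z ∈ F, Tendsto x atTop (𝓝 z) := by
  obtain ⟨z₀, hz₀⟩ := hF
  have hbdd : ∀ n, x n ∈ Metric.closedBall z₀ (dist (x 0) z₀) :=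
    fun n => hx z₀ hz₀ (Nat.zero_le n)
  obtain ⟨p, -, φ, hφ, hp⟩ := (isCompact_closedBall z₀ _).tendsto_subseq hbdd
  have hpF := hcluster p φ hφ hp
  exact ⟨p, hpF, tendsto_of_antitone_dist_of_tendsto_comp (hx p hpF) hp⟩

end Fejer

theorem summable_of_le_sub_succ {u r : ℕ → ℝ} (hr : ∀ n, 0 ≤ r n) (hu : ∀ n, 0 ≤ u n)
    (h : ∀ n, r n ≤ u n - u (n + 1)) : Summable r := by
  refine summable_of_sum_range_le (c := u 0) hr fun n => ?_
  calc ∑ i ∈ Finset.range n, r i ≤ ∑ i ∈ Finset.range n, (u i - u (i + 1)) :=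
        Finset.sum_le_sum fun i _ => h i
    _ = u 0 - u n := Finset.sum_range_sub' u n
    _ ≤ u 0 := by linarith [hu n]

section FejerInequality

variable {E : Type*} [SeminormedAddCommGroup E] {x r : ℕ → E} {c : ℝ}

theorem FejerMonotone.of_norm_sub_sq_add_le {F : Set E} (hc : 0 ≤ c)
    (h : ∀ n, ∀ z ∈ F, ‖x (n + 1) - z‖ ^ 2 + c * ‖r n‖ ^ 2 ≤ ‖x n - z‖ ^ 2) :
    FejerMonotone x F := by
  refine fun z hz => antitone_nat_of_succ_le fun n => ?_
  rw [dist_eq_norm, dist_eq_norm, ← pow_le_pow_iff_left₀ (norm_nonneg _) (norm_nonneg _)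
    two_ne_zero]
  nlinarith [h n z hz]

theorem tendsto_zero_of_norm_sub_sq_add_le {z : E} (hc : 0 < c)
    (h : ∀ n, ‖x (n + 1) - z‖ ^ 2 + c * ‖r n‖ ^ 2 ≤ ‖x n - z‖ ^ 2) :
    Tendsto r atTop (𝓝 0) := by
  have hsum : Summable fun n => c * ‖r n‖ ^ 2 :=
    summable_of_le_sub_succ (fun n => by positivity) (fun n => sq_nonneg ‖x n - z‖)
      fun n => by linarith [h n]
  refine tendsto_zero_iff_norm_tendsto_zero.2 ?_
  simpa using ((summable_mul_left_iff hc.ne').1 hsum).tendsto_atTop_zero.sqrt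

end FejerInequality

section Projection

variable {E : Type*} [NormedAddCommGroup E] [InnerProductSpace ℝ E]

theorem inner_sub_proj_nonpos {C : Set E} (hC : Convex ℝ C) {P : E → E}
    (hP : ∀ x, P x ∈ C ∧ ∀ y ∈ C, dist x (P x) ≤ dist x y) (x : E) :
    ∀ w ∈ C, ⟪x - P x, w - P x⟫ ≤ 0 := by
  have : Nonempty C := ⟨⟨P x, (hP x).1⟩⟩
  refine (norm_eq_iInf_iff_real_inner_le_zero hC (hP x).1).1 <|
    le_antisymm (le_ciInf fun w => ?_) (ciInf_le (f := fun w : C => ‖x - w‖) ⟨0, ?_⟩ ⟨P x, (hP x).1⟩)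
  · simpa [dist_eq_norm] using (hP x).2 w w.2
  · rintro _ ⟨w, rfl⟩
    exact norm_nonneg _

-- The reflection `2 • P x - w` of `w ∈ W` lies in `W` too, so both inner products are `≤ 0`.
theorem inner_sub_proj_eq_zero (W : AffineSubspace ℝ E) {P : E → E}
    (hP : ∀ x, P x ∈ (W : Set E) ∧ ∀ y ∈ (W : Set E), dist x (P x) ≤ dist x y) (x : E) :
    ∀ w ∈ (W : Set E), ⟪x - P x, w - P x⟫ = 0 := by
  intro w hw
  have hle := inner_sub_proj_nonpos W.convex hP x
  have hrefl : P x + (P x - w) ∈ (W : Set E) := by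
    simpa [vsub_eq_sub, vadd_eq_add, add_comm] using
      W.smul_vsub_vadd_mem 1 (hP x).1 hw (hP x).1
  have hge := hle _ hrefl
  rw [show P x + (P x - w) - P x = -(w - P x) by abel, inner_neg_right] at hge
  linarith [hle w hw]

theorem norm_sub_sq_le_of_proj {a y w : E} (h_yw_a : ⟪y - w, a - w⟫ = 0) :
    ‖w - a‖ ^ 2 ≤ ‖y - a‖ ^ 2 := by
  have horth : ⟪y - w, w - a⟫ = 0 := by
    rw [show w - a = -(a - w) by abel, inner_neg_right, h_yw_a, neg_zero]
  have hpyth := norm_add_sq_real (y - w) (w - a)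
  rw [horth, sub_add_sub_cancel] at hpyth
  nlinarith [sq_nonneg ‖y - w‖]

/-- Here `y = P₂ a` and `w = P₁ y`, with `a, z ∈ S₁` and `z ∈ S₂`. -/
theorem norm_sub_sq_le_inner_of_proj {a y w z : E} (h_yw_z : ⟪y - w, z - w⟫ = 0)
    (h_yw_a : ⟪y - w, a - w⟫ = 0) (h_ay : ⟪a - y, z - y⟫ ≤ 0) :
    ‖y - a‖ ^ 2 ≤ ⟪z - a, w - a⟫ := by
  have h₁ : ⟪z - a, y - w⟫ = 0 := by
    rw [real_inner_comm, show z - a = (z - w) - (a - w) by abel, inner_sub_right, h_yw_z,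
      h_yw_a, sub_zero]
  have h₂ : ⟪z - a, y - a⟫ = -⟪a - y, z - y⟫ + ‖y - a‖ ^ 2 := by
    rw [show z - a = (z - y) + (y - a) by abel, inner_add_left, real_inner_self_eq_norm_sq,
      real_inner_comm, ← inner_neg_left, neg_sub]
  have h₃ : ⟪z - a, w - a⟫ = ⟪z - a, y - a⟫ - ⟪z - a, y - w⟫ := by
    rw [← inner_sub_right, sub_sub_sub_cancel_left]
  linarith

/-- One extrapolated step `a ↦ a + ρ (s / ‖d‖²) d`, where `s` plays the role of `‖P₂ a - a‖²`
and `d` of `P₁ P₂ a - a`. -/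
theorem norm_extrapolate_sub_sq_le {a d z : E} {s ρ : ℝ} (hd : d ≠ 0) (hds : ‖d‖ ^ 2 ≤ s)
    (hs : s ≤ ⟪z - a, d⟫) (hρ₀ : 0 ≤ ρ) (hρ₂ : ρ ≤ 2) :
    ‖a + (ρ * (s / ‖d‖ ^ 2)) • d - z‖ ^ 2 + ρ * (2 - ρ) * s ≤ ‖a - z‖ ^ 2 := by
  set K := s / ‖d‖ ^ 2
  have hD : 0 < ‖d‖ ^ 2 := by positivity
  have hK₁ : 1 ≤ K := (one_le_div hD).2 hds
  have hKd : K * ‖d‖ ^ 2 = s := div_mul_cancel₀ s hD.ne'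
  have hexpand : ‖a + (ρ * K) • d - z‖ ^ 2
      = ‖a - z‖ ^ 2 - 2 * (ρ * K) * ⟪z - a, d⟫ + ρ ^ 2 * K * (K * ‖d‖ ^ 2) := by
    rw [show a + (ρ * K) • d - z = (a - z) + (ρ * K) • d by abel, norm_add_sq_real,
      real_inner_smul_right, norm_smul, Real.norm_eq_abs, mul_pow, sq_abs,
      show a - z = -(z - a) by abel, inner_neg_left]
    ring
  have hρK : 0 ≤ ρ * K := by positivity
  rw [hexpand, hKd]
  nlinarith [mul_le_mul_of_nonneg_left hs hρK,
    mul_nonneg (mul_nonneg hρ₀ (hds.trans' (sq_nonneg _))) (mul_nonneg (sub_nonneg.2 hK₁)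
      (sub_nonneg.2 hρ₂))]

end Projection

theorem stmt_7_general (N : ℕ) (W : AffineSubspace ℝ (EuclideanSpace ℝ (Fin N)))
    (S₁ S₂ : Set (EuclideanSpace ℝ (Fin N)))
    (hS₁W : S₁ = (W : Set (EuclideanSpace ℝ (Fin N))))
    (h₁c : IsClosed S₁)
    (h₂c : IsClosed S₂) (h₂v : Convex ℝ S₂)
    (hI : (S₁ ∩ S₂).Nonempty)
    (P₁ P₂ : EuclideanSpace ℝ (Fin N) → EuclideanSpace ℝ (Fin N))
    (hP₁ : ∀ x, P₁ x ∈ S₁ ∧ ∀ y ∈ S₁, dist x (P₁ x) ≤ dist x y)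
    (hP₂ : ∀ x, P₂ x ∈ S₂ ∧ ∀ y ∈ S₂, dist x (P₂ x) ≤ dist x y)
    (ρ : ℝ) (hρ₀ : 0 < ρ) (hρ₂ : ρ < 2)
    (x : ℕ → EuclideanSpace ℝ (Fin N)) (K : ℕ → ℝ)
    (hx0 : x 0 ∈ S₁)
    (hKout : ∀ n : ℕ, x n ∉ S₂ →
      K n = ‖P₂ (x n) - x n‖ ^ 2 / ‖P₁ (P₂ (x n)) - x n‖ ^ 2)
    (hwd : ∀ n : ℕ, x n ∉ S₂ → P₁ (P₂ (x n)) ≠ x n)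
    (hrec : ∀ n : ℕ, x (n + 1) = x n + (ρ * K n) • (P₁ (P₂ (x n)) - x n)) :
    ∃ z ∈ S₁ ∩ S₂, Filter.Tendsto x Filter.atTop (nhds z) := by
  subst hS₁W
  have hP₁orth := inner_sub_proj_eq_zero W hP₁
  have hmem : ∀ n, x n ∈ (W : Set _) := by
    intro n
    induction n with
    | zero => exact hx0
    | succ n ih =>
      simpa [hrec n, vsub_eq_sub, vadd_eq_add, add_comm] using
        W.smul_vsub_vadd_mem (ρ * K n) (hP₁ _).1 ih ih
  have hstep : ∀ n, ∀ z ∈ (W : Set _) ∩ S₂,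
      ‖x (n + 1) - z‖ ^ 2 + ρ * (2 - ρ) * ‖P₂ (x n) - x n‖ ^ 2 ≤ ‖x n - z‖ ^ 2 := by
    intro n z ⟨hz₁, hz₂⟩
    by_cases hxn : x n ∈ S₂
    · have hfix₂ : P₂ (x n) = x n := by simpa [eq_comm] using (hP₂ (x n)).2 _ hxn
      have hfix₁ : P₁ (x n) = x n := by simpa [eq_comm] using (hP₁ (x n)).2 _ (hmem n)
      simp [hrec n, hfix₂, hfix₁]
    · rw [hrec n, hKout n hxn]
      exact norm_extrapolate_sub_sq_le (sub_ne_zero.2 (hwd n hxn))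
        (norm_sub_sq_le_of_proj (hP₁orth _ _ (hmem n)))
        (norm_sub_sq_le_inner_of_proj (hP₁orth _ _ hz₁) (hP₁orth _ _ (hmem n))
          (inner_sub_proj_nonpos h₂v hP₂ _ _ hz₂)) hρ₀.le hρ₂.le
  have hc : 0 < ρ * (2 - ρ) := mul_pos hρ₀ (by linarith)
  refine (FejerMonotone.of_norm_sub_sq_add_le hc.le hstep).exists_tendsto hI
    fun p φ hφ hp => ⟨h₁c.mem_of_tendsto hp (Eventually.of_forall fun k => hmem (φ k)), ?_⟩
  obtain ⟨z₀, hz₀⟩ := hI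
  have hres := tendsto_zero_of_norm_sub_sq_add_le hc (hstep · z₀ hz₀)
  have hP₂p : Tendsto (fun k => P₂ (x (φ k))) atTop (𝓝 p) := by
    simpa using hp.add (hres.comp hφ.tendsto_atTop)
  exact h₂c.mem_of_tendsto hP₂p (Eventually.of_forall fun k => (hP₂ _).1)

/-- Convergence of EAPM (extrapolated alternating projection method): with `S₁` a nonempty
closed affine subspace, `S₂` nonempty closed convex, `S₁ ∩ S₂ ≠ ∅`, `0 < ρ < 2`,
`x⁽⁰⁾ ∈ S₁`, and `x⁽ⁿ⁺¹⁾ = x⁽ⁿ⁾ + ρ Kₙ (P₁ P₂ x⁽ⁿ⁾ − x⁽ⁿ⁾)` with the extrapolation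
factor `Kₙ` as specified, the sequence `(x⁽ⁿ⁾)` converges to a point of `S₁ ∩ S₂`. -/
theorem stmt_7 (N : ℕ) (W : AffineSubspace ℝ (EuclideanSpace ℝ (Fin N)))
    (S₁ S₂ : Set (EuclideanSpace ℝ (Fin N)))
    (hS₁W : S₁ = (W : Set (EuclideanSpace ℝ (Fin N))))
    (h₁c : IsClosed S₁) (h₁n : S₁.Nonempty)
    (h₂c : IsClosed S₂) (h₂v : Convex ℝ S₂) (h₂n : S₂.Nonempty)
    (hI : (S₁ ∩ S₂).Nonempty)
    (P₁ P₂ : EuclideanSpace ℝ (Fin N) → EuclideanSpace ℝ (Fin N))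
    (hP₁ : ∀ x, P₁ x ∈ S₁ ∧ ∀ y ∈ S₁, dist x (P₁ x) ≤ dist x y)
    (hP₂ : ∀ x, P₂ x ∈ S₂ ∧ ∀ y ∈ S₂, dist x (P₂ x) ≤ dist x y)
    (ρ : ℝ) (hρ₀ : 0 < ρ) (hρ₂ : ρ < 2)
    (x : ℕ → EuclideanSpace ℝ (Fin N)) (K : ℕ → ℝ)
    (hx0 : x 0 ∈ S₁)
    (hKin : ∀ n : ℕ, x n ∈ S₂ → K n = 1)
    (hKout : ∀ n : ℕ, x n ∉ S₂ →
      K n = ‖P₂ (x n) - x n‖ ^ 2 / ‖P₁ (P₂ (x n)) - x n‖ ^ 2)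
    (hwd : ∀ n : ℕ, x n ∉ S₂ → P₁ (P₂ (x n)) ≠ x n)
    (hrec : ∀ n : ℕ, x (n + 1) = x n + (ρ * K n) • (P₁ (P₂ (x n)) - x n)) :
    ∃ z ∈ S₁ ∩ S₂, Filter.Tendsto x Filter.atTop (nhds z) :=
  stmt_7_general N W S₁ S₂ hS₁W h₁c h₂c h₂v hI P₁ P₂ hP₁ hP₂ ρ hρ₀ hρ₂ x K hx0 hKout hwd hrec
end

section
/- (Convergence of EPPM, the extrapolated parallel projection method.) Let S₁ and S₂ be nonempty closed convex subsets of ℝ^N with S₁ ∩ S₂ ≠ ∅, and let P₁, P₂ denote the metric projections onto S₁ and S₂. Fix χ with 0 < χ < 2, let x⁽⁰⁾ ∈ ℝ^N, and define for all n ∈ ℕ: x⁽ⁿ⁺¹⁾ = x⁽ⁿ⁾ + χ Lₙ ((P₁ x⁽ⁿ⁾ + P₂ x⁽ⁿ⁾)/2 − x⁽ⁿ⁾), where Lₙ = 2 (‖P₁ x⁽ⁿ⁾ − x⁽ⁿ⁾‖² + ‖P₂ x⁽ⁿ⁾ − x⁽ⁿ⁾‖²) / ‖P₁ x⁽ⁿ⁾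 + P₂ x⁽ⁿ⁾ − 2 x⁽ⁿ⁾‖² if x⁽ⁿ⁾ ∉ S₁ ∩ S₂, and Lₙ = 1 if x⁽ⁿ⁾ ∈ S₁ ∩ S₂. Assume that for every n with x⁽ⁿ⁾ ∉ S₁ ∩ S₂ one has P₁ x⁽ⁿ⁾ + P₂ x⁽ⁿ⁾ ≠ 2 x⁽ⁿ⁾ (so Lₙ is well defined). Then the sequence (x⁽ⁿ⁾) converges to a point of S₁ ∩ S₂. -/
open scoped InnerProductSpace
open Filter

lemma eppm_vi {E : Type*} [NormedAddCommGroup E] [InnerProductSpace ℝ E]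
    {S : Set E} (hv : Convex ℝ S) {x u : E} (hu : u ∈ S)
    (h : ∀ y ∈ S, dist x u ≤ dist x y) {y : E} (hy : y ∈ S) :
    ⟪x - u, y - u⟫_ℝ ≤ 0 := by
  haveI : Nonempty S := ⟨⟨u, hu⟩⟩
  have hinf : ‖x - u‖ = ⨅ w : S, ‖x - w‖ := by
    apply le_antisymm
    · exact le_ciInf fun w => by
        simpa [dist_eq_norm] using h w w.2
    · have hbdd : BddBelow (Set.range fun w : S => ‖x - (w : E)‖) :=
        ⟨0, Set.forall_mem_range.mpr fun w => norm_nonneg _⟩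
      exact ciInf_le hbdd ⟨u, hu⟩
  exact (norm_eq_iInf_iff_real_inner_le_zero hv hu).1 hinf y hy

lemma eppm_vi' {E : Type*} [NormedAddCommGroup E] [InnerProductSpace ℝ E]
    {S : Set E} (hv : Convex ℝ S) {x u : E} (hu : u ∈ S)
    (h : ∀ y ∈ S, dist x u ≤ dist x y) {z : E} (hz : z ∈ S) :
    ‖u - x‖ ^ 2 ≤ ⟪u - x, z - x⟫_ℝ := by
  have h1 : ⟪x - u, z - u⟫_ℝ ≤ 0 := eppm_vi hv hu h hz
  have h2 : ⟪u - x, z - x⟫_ℝ = -⟪x - u, z - u⟫_ℝ + ‖u - x‖ ^ 2 := by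
    have : (z : E) - x = (z - u) + (u - x) := by abel
    rw [this, inner_add_right, real_inner_self_eq_norm_sq,
      show (u : E) - x = -(x - u) by abel, inner_neg_left]
  linarith

lemma eppm_key {E : Type*} [NormedAddCommGroup E] [InnerProductSpace ℝ E]
    (a b w : E) (χ L : ℝ)
    (ha : ‖a‖ ^ 2 ≤ ⟪a, w⟫_ℝ) (hb : ‖b‖ ^ 2 ≤ ⟪b, w⟫_ℝ)
    (hL : L * ‖a + b‖ ^ 2 = 2 * (‖a‖ ^ 2 + ‖b‖ ^ 2)) (hL1 : 1 ≤ L)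
    (hχ0 : 0 < χ) (_hχ2 : χ < 2) :
    ‖(χ * L) • ((1/2 : ℝ) • (a + b)) - w‖ ^ 2
      + χ * (2 - χ) * (L ^ 2 * ‖(1/2 : ℝ) • (a + b)‖ ^ 2) ≤ ‖w‖ ^ 2 := by
  have hLpos : (0:ℝ) < L := lt_of_lt_of_le one_pos hL1
  set d : E := (1/2 : ℝ) • (a + b) with hd
  have hD : ‖d‖ ^ 2 = ‖a + b‖ ^ 2 / 4 := by
    rw [hd, norm_smul]
    simp
    ring
  have hdw : ⟪d, w⟫_ℝ = (⟪a, w⟫_ℝ + ⟪b, w⟫_ℝ) / 2 := by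
    rw [hd, real_inner_smul_left, inner_add_left]; ring
  have hexp : ‖(χ * L) • d - w‖ ^ 2
      = (χ * L) ^ 2 * ‖d‖ ^ 2 - 2 * ((χ * L) * ⟪d, w⟫_ℝ) + ‖w‖ ^ 2 := by
    rw [norm_sub_sq_real, real_inner_smul_left, norm_smul, Real.norm_eq_abs,
      abs_of_pos (mul_pos hχ0 hLpos)]
    ring
  have hkey : L * ‖d‖ ^ 2 ≤ ⟪d, w⟫_ℝ := by
    rw [hD, hdw]
    nlinarith
  have hmul := mul_le_mul_of_nonneg_left hkey
    (le_of_lt (by positivity : (0:ℝ) < 2 * χ * L))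
  rw [hexp]
  nlinarith

lemma eppm_sqrt_aux {f : ℕ → ℝ} (h0 : ∀ n, 0 ≤ f n)
    (h : Filter.Tendsto (fun n => f n ^ 2) Filter.atTop (nhds 0)) :
    Filter.Tendsto f Filter.atTop (nhds 0) := by
  have h1 : Filter.Tendsto (fun n => Real.sqrt (f n ^ 2)) Filter.atTop (nhds (Real.sqrt 0)) :=
    (Real.continuous_sqrt.tendsto 0).comp h
  simpa [Real.sqrt_sq (h0 _)] using h1

/-- Convergence of EPPM (extrapolated parallel projection method): with `S₁, S₂` nonempty
closed convex sets in `ℝ^N`, `S₁ ∩ S₂ ≠ ∅`, `0 < χ < 2`, and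
`x⁽ⁿ⁺¹⁾ = x⁽ⁿ⁾ + χ Lₙ ((P₁ x⁽ⁿ⁾ + P₂ x⁽ⁿ⁾)/2 − x⁽ⁿ⁾)` with the extrapolation factor `Lₙ`
as specified, the sequence `(x⁽ⁿ⁾)` converges to a point of `S₁ ∩ S₂`. -/
theorem stmt_8 (N : ℕ) (S₁ S₂ : Set (EuclideanSpace ℝ (Fin N)))
    (h₁c : IsClosed S₁) (h₁v : Convex ℝ S₁) (h₁n : S₁.Nonempty)
    (h₂c : IsClosed S₂) (h₂v : Convex ℝ S₂) (h₂n : S₂.Nonempty)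
    (hI : (S₁ ∩ S₂).Nonempty)
    (P₁ P₂ : EuclideanSpace ℝ (Fin N) → EuclideanSpace ℝ (Fin N))
    (hP₁ : ∀ x, P₁ x ∈ S₁ ∧ ∀ y ∈ S₁, dist x (P₁ x) ≤ dist x y)
    (hP₂ : ∀ x, P₂ x ∈ S₂ ∧ ∀ y ∈ S₂, dist x (P₂ x) ≤ dist x y)
    (χ : ℝ) (hχ₀ : 0 < χ) (hχ₂ : χ < 2)
    (x : ℕ → EuclideanSpace ℝ (Fin N)) (L : ℕ → ℝ)
    (hLin : ∀ n : ℕ, x n ∈ S₁ ∩ S₂ → L n = 1)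
    (hLout : ∀ n : ℕ, x n ∉ S₁ ∩ S₂ →
      L n = 2 * (‖P₁ (x n) - x n‖ ^ 2 + ‖P₂ (x n) - x n‖ ^ 2) /
        ‖P₁ (x n) + P₂ (x n) - (2 : ℝ) • x n‖ ^ 2)
    (hwd : ∀ n : ℕ, x n ∉ S₁ ∩ S₂ → P₁ (x n) + P₂ (x n) ≠ (2 : ℝ) • x n)
    (hrec : ∀ n : ℕ,
      x (n + 1) = x n + (χ * L n) • (((1 : ℝ) / 2) • (P₁ (x n) + P₂ (x n)) - x n)) :
    ∃ z ∈ S₁ ∩ S₂, Filter.Tendsto x Filter.atTop (nhds z) := by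
  -- abbreviations
  have hab_eq : ∀ n, (P₁ (x n) - x n) + (P₂ (x n) - x n)
      = P₁ (x n) + P₂ (x n) - (2 : ℝ) • x n := by
    intro n; rw [two_smul]; abel
  have hd_eq : ∀ n, ((1 : ℝ) / 2) • (P₁ (x n) + P₂ (x n)) - x n
      = ((1 : ℝ) / 2) • ((P₁ (x n) - x n) + (P₂ (x n) - x n)) := by
    intro n
    rw [hab_eq n, smul_sub, smul_smul]
    norm_num
  -- facts about L
  have hLn : ∀ n, L n * ‖(P₁ (x n) - x n) + (P₂ (x n) - x n)‖ ^ 2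
      = 2 * (‖P₁ (x n) - x n‖ ^ 2 + ‖P₂ (x n) - x n‖ ^ 2) ∧ 1 ≤ L n := by
    intro n
    by_cases hx : x n ∈ S₁ ∩ S₂
    · have e1 : P₁ (x n) = x n :=
        (dist_le_zero.mp (by simpa using (hP₁ (x n)).2 (x n) hx.1)).symm
      have e2 : P₂ (x n) = x n :=
        (dist_le_zero.mp (by simpa using (hP₂ (x n)).2 (x n) hx.2)).symm
      rw [hLin n hx, e1, e2]
      simp
    · have hne : (P₁ (x n) - x n) + (P₂ (x n) - x n) ≠ 0 := by
        rw [hab_eq n]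
        exact sub_ne_zero_of_ne (hwd n hx)
      have hpos : (0:ℝ) < ‖(P₁ (x n) - x n) + (P₂ (x n) - x n)‖ ^ 2 :=
        pow_pos (norm_pos_iff.mpr hne) 2
      have hLval : L n = 2 * (‖P₁ (x n) - x n‖ ^ 2 + ‖P₂ (x n) - x n‖ ^ 2) /
          ‖(P₁ (x n) - x n) + (P₂ (x n) - x n)‖ ^ 2 := by
        rw [hLout n hx, hab_eq n]
      constructor
      · rw [hLval, div_mul_cancel₀ _ (ne_of_gt hpos)]
      · rw [hLval, le_div_iff₀ hpos, one_mul]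
        have hpar : ‖(P₁ (x n) - x n) + (P₂ (x n) - x n)‖ ^ 2
            ≤ 2 * (‖P₁ (x n) - x n‖ ^ 2 + ‖P₂ (x n) - x n‖ ^ 2) := by
          have h1 := norm_add_sq_real (P₁ (x n) - x n) (P₂ (x n) - x n)
          have h2 := real_inner_le_norm (P₁ (x n) - x n) (P₂ (x n) - x n)
          nlinarith [sq_nonneg (‖P₁ (x n) - x n‖ - ‖P₂ (x n) - x n‖)]
        exact hpar
  -- the Fejér step inequality
  have hstep : ∀ z, z ∈ S₁ → z ∈ S₂ → ∀ n,
      ‖x (n + 1) - z‖ ^ 2 + χ * (2 - χ) *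
        ((L n) ^ 2 * ‖((1 : ℝ) / 2) • (P₁ (x n) + P₂ (x n)) - x n‖ ^ 2)
      ≤ ‖x n - z‖ ^ 2 := by
    intro z hz1 hz2 n
    have ha : ‖P₁ (x n) - x n‖ ^ 2 ≤ ⟪P₁ (x n) - x n, z - x n⟫_ℝ :=
      eppm_vi' h₁v (hP₁ (x n)).1 (hP₁ (x n)).2 hz1
    have hb : ‖P₂ (x n) - x n‖ ^ 2 ≤ ⟪P₂ (x n) - x n, z - x n⟫_ℝ :=
      eppm_vi' h₂v (hP₂ (x n)).1 (hP₂ (x n)).2 hz2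
    have hkey := eppm_key (P₁ (x n) - x n) (P₂ (x n) - x n) (z - x n) χ (L n)
      ha hb (hLn n).1 (hLn n).2 hχ₀ hχ₂
    have hx1 : x (n + 1) - z
        = (χ * L n) • ((1/2 : ℝ) • ((P₁ (x n) - x n) + (P₂ (x n) - x n))) - (z - x n) := by
      rw [hrec n, hd_eq n]; abel
    rw [hx1, hd_eq n, show ‖x n - z‖ = ‖z - x n‖ from norm_sub_rev _ _]
    exact hkey
  have hKpos : (0:ℝ) < χ * (2 - χ) := by nlinarith
  obtain ⟨z₀, hz₀⟩ := hI
  -- Fejér monotonicity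
  have hanti : ∀ z, z ∈ S₁ → z ∈ S₂ → Antitone (fun n => ‖x n - z‖ ^ 2) := by
    intro z hz1 hz2
    apply antitone_nat_of_succ_le
    intro n
    have h1 := hstep z hz1 hz2 n
    have h2 : 0 ≤ χ * (2 - χ) *
        ((L n) ^ 2 * ‖((1 : ℝ) / 2) • (P₁ (x n) + P₂ (x n)) - x n‖ ^ 2) :=
      mul_nonneg hKpos.le (by positivity)
    show ‖x (n + 1) - z‖ ^ 2 ≤ ‖x n - z‖ ^ 2
    linarith
  have hconv : ∀ z, z ∈ S₁ → z ∈ S₂ →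
      Filter.Tendsto (fun n => ‖x n - z‖ ^ 2) Filter.atTop
        (nhds (⨅ n, ‖x n - z‖ ^ 2)) := by
    intro z hz1 hz2
    exact tendsto_atTop_ciInf (hanti z hz1 hz2)
      ⟨0, Set.forall_mem_range.mpr fun n => sq_nonneg _⟩
  -- the residuals tend to zero
  have gconv := hconv z₀ hz₀.1 hz₀.2
  have hdiff : Filter.Tendsto
      (fun n => ‖x n - z₀‖ ^ 2 - ‖x (n + 1) - z₀‖ ^ 2) Filter.atTop (nhds 0) := by
    have h2 : Filter.Tendsto (fun n => ‖x (n + 1) - z₀‖ ^ 2) Filter.atTop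
        (nhds (⨅ n, ‖x n - z₀‖ ^ 2)) := gconv.comp (tendsto_add_atTop_nat 1)
    simpa using gconv.sub h2
  have hKc0 : Filter.Tendsto (fun n => χ * (2 - χ) *
      ((L n) ^ 2 * ‖((1 : ℝ) / 2) • (P₁ (x n) + P₂ (x n)) - x n‖ ^ 2))
      Filter.atTop (nhds 0) := by
    apply squeeze_zero (fun n => mul_nonneg hKpos.le (by positivity)) _ hdiff
    intro n
    have h1 := hstep z₀ hz₀.1 hz₀.2 n
    linarith
  have hc0 : Filter.Tendsto
      (fun n => (L n) ^ 2 * ‖((1 : ℝ) / 2) • (P₁ (x n) + P₂ (x n)) - x n‖ ^ 2)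
      Filter.atTop (nhds 0) := by
    have h2 := hKc0.const_mul (χ * (2 - χ))⁻¹
    rw [mul_zero] at h2
    exact h2.congr fun n => inv_mul_cancel_left₀ hKpos.ne' _
  -- distance to the two sets tends to zero
  have hdnorm : ∀ n, ‖((1 : ℝ) / 2) • (P₁ (x n) + P₂ (x n)) - x n‖ ^ 2
      = ‖(P₁ (x n) - x n) + (P₂ (x n) - x n)‖ ^ 2 / 4 := by
    intro n
    rw [hd_eq n, norm_smul]
    simp
    ring
  have habsq : ∀ n, ‖P₁ (x n) - x n‖ ^ 2 + ‖P₂ (x n) - x n‖ ^ 2 ≤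
      2 * ((L n) ^ 2 * ‖((1 : ℝ) / 2) • (P₁ (x n) + P₂ (x n)) - x n‖ ^ 2) := by
    intro n
    have e := (hLn n).1
    have hL1 := (hLn n).2
    have hnn : 0 ≤ L n * ‖(P₁ (x n) - x n) + (P₂ (x n) - x n)‖ ^ 2 := by
      rw [e]; positivity
    have hmul := mul_le_mul_of_nonneg_right hL1 hnn
    rw [hdnorm n]
    nlinarith
  have h2c : Filter.Tendsto
      (fun n => 2 * ((L n) ^ 2 * ‖((1 : ℝ) / 2) • (P₁ (x n) + P₂ (x n)) - x n‖ ^ 2))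
      Filter.atTop (nhds 0) := by simpa using hc0.const_mul 2
  have ha2 : Filter.Tendsto (fun n => ‖P₁ (x n) - x n‖ ^ 2) Filter.atTop (nhds 0) := by
    apply squeeze_zero (fun n => sq_nonneg _) _ h2c
    intro n
    have := habsq n
    nlinarith [sq_nonneg ‖P₂ (x n) - x n‖]
  have hb2 : Filter.Tendsto (fun n => ‖P₂ (x n) - x n‖ ^ 2) Filter.atTop (nhds 0) := by
    apply squeeze_zero (fun n => sq_nonneg _) _ h2c
    intro n
    have := habsq n
    nlinarith [sq_nonneg ‖P₁ (x n) - x n‖]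
  have ha0 : Filter.Tendsto (fun n => P₁ (x n) - x n) Filter.atTop (nhds 0) :=
    tendsto_zero_iff_norm_tendsto_zero.mpr
      (eppm_sqrt_aux (fun n => norm_nonneg _) ha2)
  have hb0 : Filter.Tendsto (fun n => P₂ (x n) - x n) Filter.atTop (nhds 0) :=
    tendsto_zero_iff_norm_tendsto_zero.mpr
      (eppm_sqrt_aux (fun n => norm_nonneg _) hb2)
  -- Bolzano–Weierstrass
  have hbd : ∀ n, x n ∈ Metric.closedBall z₀ ‖x 0 - z₀‖ := by
    intro n
    have h1 : ‖x n - z₀‖ ^ 2 ≤ ‖x 0 - z₀‖ ^ 2 := hanti z₀ hz₀.1 hz₀.2 (Nat.zero_le n)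
    have h2 := Real.sqrt_le_sqrt h1
    rw [Real.sqrt_sq (norm_nonneg _), Real.sqrt_sq (norm_nonneg _)] at h2
    simpa [Metric.mem_closedBall, dist_eq_norm] using h2
  obtain ⟨w, -, φ, hφ, hxφ⟩ :=
    tendsto_subseq_of_bounded Metric.isBounded_closedBall hbd
  have hw1 : w ∈ S₁ := by
    have h1 : Filter.Tendsto (fun k => P₁ (x (φ k))) Filter.atTop (nhds w) := by
      have h2 := hxφ.add (ha0.comp hφ.tendsto_atTop)
      simp only [Function.comp] at h2
      simpa using h2
    exact h₁c.mem_of_tendsto h1 (Filter.Eventually.of_forall fun k => (hP₁ _).1)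
  have hw2 : w ∈ S₂ := by
    have h1 : Filter.Tendsto (fun k => P₂ (x (φ k))) Filter.atTop (nhds w) := by
      have h2 := hxφ.add (hb0.comp hφ.tendsto_atTop)
      simp only [Function.comp] at h2
      simpa using h2
    exact h₂c.mem_of_tendsto h1 (Filter.Eventually.of_forall fun k => (hP₂ _).1)
  -- conclude: full convergence to w
  have hconvw := hconv w hw1 hw2
  have hsub1 : Filter.Tendsto (fun k => ‖x (φ k) - w‖ ^ 2) Filter.atTop
      (nhds (⨅ n, ‖x n - w‖ ^ 2)) := hconvw.comp hφ.tendsto_atTop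
  have hsub2 : Filter.Tendsto (fun k => ‖x (φ k) - w‖ ^ 2) Filter.atTop (nhds 0) := by
    have h3 : Filter.Tendsto (fun k => x (φ k) - w) Filter.atTop (nhds (w - w)) :=
      hxφ.sub tendsto_const_nhds
    have h4 := (h3.norm).pow 2
    simpa using h4
  have hinf0 : (⨅ n, ‖x n - w‖ ^ 2) = 0 := tendsto_nhds_unique hsub1 hsub2
  have hfull : Filter.Tendsto (fun n => ‖x n - w‖ ^ 2) Filter.atTop (nhds 0) :=
    hinf0 ▸ hconvw
  have hnorm : Filter.Tendsto (fun n => ‖x n - w‖) Filter.atTop (nhds 0) :=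
    eppm_sqrt_aux (fun n => norm_nonneg _) hfull
  exact ⟨w, ⟨hw1, hw2⟩, tendsto_iff_norm_sub_tendsto_zero.mpr hnorm⟩
end

section
/- (Convergence of the regularizing ART variant.) Let A be a real M × N matrix all of whose rows a₁ᵀ, …, a_Mᵀ are nonzero, let b ∈ ℝ^M, σ > 0, and fix a relaxation parameter λ with 0 < λ < 2. Define sequences (u⁽ⁿ⁾) in ℝ^M and (x⁽ⁿ⁾) in ℝ^N by u⁽⁰⁾ = 0, x⁽⁰⁾ = 0, and for each n ∈ ℕ, with jₙ = (n mod M) + 1 and γₙ = λ (σ (b_{jₙ} − a_{jₙ}ᵀ x⁽ⁿ⁾) − u⁽ⁿ⁾_{jₙ}) / (1 + σ² ‖a_{jₙ}‖²): u⁽ⁿ⁺¹⁾ = u⁽ⁿ⁾ + γₙ e_{jₙ} and x⁽ⁿ⁺¹⁾ = x⁽ⁿ⁾ + σ γₙ a_{jₙ}. Then the sequence (x⁽ⁿ⁾) converges to the unique minimizer over ℝ^N of the function x ↦ σ² ‖b − A x‖² + ‖x‖². -/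
open Matrix

/-- Matrix–vector multiplication viewed as a map between Euclidean spaces. -/
noncomputable def mulVecE {M N : ℕ} (A : Matrix (Fin M) (Fin N) ℝ)
    (x : EuclideanSpace ℝ (Fin N)) : EuclideanSpace ℝ (Fin M) :=
  (WithLp.equiv 2 (Fin M → ℝ)).symm (A.mulVec ((WithLp.equiv 2 (Fin N → ℝ)) x))

/-- The `j`-th row of a matrix, viewed as a vector in Euclidean space. -/
noncomputable def rowE {M N : ℕ} (A : Matrix (Fin M) (Fin N) ℝ) (j : Fin M) :
    EuclideanSpace ℝ (Fin N) :=
  (WithLp.equiv 2 (Fin N → ℝ)).symm (A j)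

/-!
Stack the iterates as `z⁽ⁿ⁾ = (u⁽ⁿ⁾, x⁽ⁿ⁾) ∈ ℝ^M × ℝ^N`. The ART step is then the relaxed Kaczmarz
projection for the row `(e_j, σ a_j)` of the consistent system `u + σ A x = σ b`, and since
`z⁽⁰⁾ = 0` all iterates stay in the row space `V`. A relaxed projection with `0 < λ < 2` is
non-expansive and preserves the norm only of vectors orthogonal to its row, so a full sweep is a
strict contraction on the finite-dimensional space `V`, hence contracts by a uniform factor
`q < 1`: the iterates converge geometrically to the solution `s ∈ V`.

For every `y`, the vector `(σ (b - A y), y)` solves the system and has squared norm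
`σ²‖b - A y‖² + ‖y‖²`. It differs from `s` by a vector orthogonal to `V`, so by Pythagoras that
norm is `‖s‖² + ‖(σ (b - A y), y) - s‖²`, and the second component of `s` is the unique minimizer.
-/

open Filter Topology Set Metric
open scoped RealInnerProductSpace

theorem ContinuousLinearMap.opNorm_lt_one_of_norm_apply_lt {E F : Type*}
    [NormedAddCommGroup E] [NormedSpace ℝ E] [FiniteDimensional ℝ E]
    [SeminormedAddCommGroup F] [NormedSpace ℝ F] (T : E →L[ℝ] F)
    (hT : ∀ w, w ≠ 0 → ‖T w‖ < ‖w‖) : ‖T‖ < 1 := by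
  rcases subsingleton_or_nontrivial E with hE | hE
  · simp [Subsingleton.elim T 0]
  obtain ⟨w₀, hw₀, hmax⟩ := (isCompact_sphere (0 : E) 1).exists_isMaxOn
    (NormedSpace.sphere_nonempty.mpr zero_le_one) (continuous_norm.comp T.continuous).continuousOn
  rw [mem_sphere_zero_iff_norm] at hw₀
  refine (T.opNorm_le_bound (norm_nonneg _) fun w => ?_).trans_lt
    (hw₀ ▸ hT w₀ (norm_ne_zero_iff.mp (hw₀.symm ▸ one_ne_zero)))
  rcases eq_or_ne w 0 with rfl | hw
  · simp
  have hunit : ‖w‖⁻¹ • w ∈ sphere (0 : E) 1 := by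
    rw [mem_sphere_zero_iff_norm, norm_smul, norm_inv, norm_norm,
      inv_mul_cancel₀ (norm_ne_zero_iff.mpr hw)]
  have : ‖T (‖w‖⁻¹ • w)‖ ≤ ‖T w₀‖ := hmax hunit
  rw [map_smul, norm_smul, norm_inv, norm_norm] at this
  rwa [inv_mul_le_iff₀ (norm_pos_iff.mpr hw), mul_comm] at this

section InnerProductSpace

variable {H : Type*} [NormedAddCommGroup H] [InnerProductSpace ℝ H]

theorem mem_orthogonal_span_range_iff {ι : Type*} {r : ι → H} {v : H} :
    v ∈ (Submodule.span ℝ (range r))ᗮ ↔ ∀ i, ⟪r i, v⟫ = 0 := by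
  refine ⟨fun h i => h _ (Submodule.subset_span (mem_range_self i)), fun h u hu => ?_⟩
  have hspan : Submodule.span ℝ (range r) ≤ (ℝ ∙ v)ᗮ := Submodule.span_le.mpr <|
    range_subset_iff.mpr fun i => Submodule.mem_orthogonal_singleton_iff_inner_left.mpr (h i)
  exact Submodule.mem_orthogonal_singleton_iff_inner_left.mp (hspan hu)

theorem exists_mem_span_forall_inner_eq [FiniteDimensional ℝ H] {ι : Type*} (r : ι → H)
    (z : H) :
    ∃ s ∈ Submodule.span ℝ (range r), ∀ i, ⟪r i, s⟫ = ⟪r i, z⟫ := by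
  set V := Submodule.span ℝ (range r)
  refine ⟨V.starProjection z, V.starProjection_apply_mem z, fun i => ?_⟩
  have := V.starProjection_inner_eq_zero z (r i) (Submodule.subset_span (mem_range_self i))
  rw [inner_sub_left, sub_eq_zero] at this
  rw [real_inner_comm, ← this, real_inner_comm]

theorem norm_sq_eq_of_forall_inner_eq {ι : Type*} {r : ι → H} {s z : H}
    (hs : s ∈ Submodule.span ℝ (range r)) (h : ∀ i, ⟪r i, z⟫ = ⟪r i, s⟫) :
    ‖z‖ ^ 2 = ‖s‖ ^ 2 + ‖z - s‖ ^ 2 := by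
  have horth : ⟪s, z - s⟫ = 0 :=
    mem_orthogonal_span_range_iff.mpr (fun i => by rw [inner_sub_right, h, sub_self]) s hs
  have := norm_add_sq_real s (z - s)
  rw [add_sub_cancel, horth] at this
  linarith

-- For `r = 0` this is the identity, as `lam / 0 = 0`.
noncomputable def relaxedProj (lam : ℝ) (r : H) : H →L[ℝ] H :=
  ContinuousLinearMap.id ℝ H - (lam / ‖r‖ ^ 2) • (innerSL ℝ r).smulRight r

section relaxedProj
variable {lam : ℝ} {r w : H}

theorem relaxedProj_apply : relaxedProj lam r w = w - (lam * ⟪r, w⟫ / ‖r‖ ^ 2) • r := by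
  simp [relaxedProj, smul_smul, div_mul_eq_mul_div]

theorem norm_relaxedProj_apply_sq :
    ‖relaxedProj lam r w‖ ^ 2 = ‖w‖ ^ 2 - lam * (2 - lam) * ⟪r, w⟫ ^ 2 / ‖r‖ ^ 2 := by
  rcases eq_or_ne r 0 with rfl | hr
  · simp [relaxedProj_apply]
  rw [relaxedProj_apply, norm_sub_sq_real, inner_smul_right, norm_smul, mul_pow,
    real_inner_comm w r, Real.norm_eq_abs, sq_abs]
  field_simp [norm_ne_zero_iff.mpr hr]
  ring

theorem norm_relaxedProj_apply_le (h₀ : 0 ≤ lam) (h₂ : lam ≤ 2) :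
    ‖relaxedProj lam r w‖ ≤ ‖w‖ := by
  refine (pow_le_pow_iff_left₀ (norm_nonneg _) (norm_nonneg _) two_ne_zero).mp ?_
  rw [norm_relaxedProj_apply_sq]
  have : 0 ≤ lam * (2 - lam) * ⟪r, w⟫ ^ 2 / ‖r‖ ^ 2 := by
    have : 0 ≤ 2 - lam := by linarith
    positivity
  linarith

theorem inner_eq_zero_of_norm_relaxedProj_apply_eq (h₀ : 0 < lam) (h₂ : lam < 2)
    (h : ‖relaxedProj lam r w‖ = ‖w‖) : ⟪r, w⟫ = 0 := by
  rcases eq_or_ne r 0 with rfl | hr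
  · simp
  by_contra hrw
  have hsq := norm_relaxedProj_apply_sq (lam := lam) (r := r) (w := w)
  rw [h] at hsq
  have : 0 < lam * (2 - lam) * ⟪r, w⟫ ^ 2 / ‖r‖ ^ 2 := by
    have : 0 < 2 - lam := by linarith
    positivity
  linarith

theorem relaxedProj_apply_of_inner_eq_zero (h : ⟪r, w⟫ = 0) : relaxedProj lam r w = w := by
  simp [relaxedProj_apply, h]

theorem relaxedProj_apply_mem {V : Submodule ℝ H} (hr : r ∈ V) (hw : w ∈ V) :
    relaxedProj lam r w ∈ V := by
  rw [relaxedProj_apply]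
  exact V.sub_mem hw (V.smul_mem _ hr)

end relaxedProj

noncomputable def kaczmarzOp (lam : ℝ) (a : ℕ → H) : ℕ → H →L[ℝ] H
  | 0 => ContinuousLinearMap.id ℝ H
  | n + 1 => (relaxedProj lam (a n)).comp (kaczmarzOp lam a n)

section kaczmarzOp
variable {lam : ℝ} {a : ℕ → H} {w : H}

theorem kaczmarzOp_zero_apply : kaczmarzOp lam a 0 w = w := rfl

theorem kaczmarzOp_succ_apply (n : ℕ) :
    kaczmarzOp lam a (n + 1) w = relaxedProj lam (a n) (kaczmarzOp lam a n w) := rfl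

theorem kaczmarzOp_add_period {M : ℕ} (ha : Function.Periodic a M) (n : ℕ) :
    kaczmarzOp lam a (n + M) = (kaczmarzOp lam a n).comp (kaczmarzOp lam a M) := by
  induction n with
  | zero => rw [zero_add]; rfl
  | succ n ih =>
    ext w
    rw [Nat.add_right_comm, kaczmarzOp_succ_apply, ih, ha n]
    rfl

theorem antitone_norm_kaczmarzOp_apply (h₀ : 0 ≤ lam) (h₂ : lam ≤ 2) :
    Antitone fun n => ‖kaczmarzOp lam a n w‖ :=
  antitone_nat_of_succ_le fun n => by
    rw [kaczmarzOp_succ_apply]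
    exact norm_relaxedProj_apply_le h₀ h₂

theorem norm_kaczmarzOp_apply_le (h₀ : 0 ≤ lam) (h₂ : lam ≤ 2) (n : ℕ) :
    ‖kaczmarzOp lam a n w‖ ≤ ‖w‖ :=
  antitone_norm_kaczmarzOp_apply h₀ h₂ (Nat.zero_le n)

theorem kaczmarzOp_apply_mem_span (hw : w ∈ Submodule.span ℝ (range a)) (n : ℕ) :
    kaczmarzOp lam a n w ∈ Submodule.span ℝ (range a) := by
  induction n with
  | zero => exact hw
  | succ n ih => exact relaxedProj_apply_mem (Submodule.subset_span (mem_range_self n)) ih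

theorem kaczmarzOp_apply_of_forall_inner_eq_zero {n : ℕ} (h : ∀ i < n, ⟪a i, w⟫ = 0) :
    kaczmarzOp lam a n w = w := by
  induction n with
  | zero => rfl
  | succ n ih =>
    rw [kaczmarzOp_succ_apply, ih fun i hi => h i (by omega)]
    exact relaxedProj_apply_of_inner_eq_zero (h n n.lt_succ_self)

theorem forall_inner_eq_zero_of_norm_kaczmarzOp_apply_eq (h₀ : 0 < lam) (h₂ : lam < 2)
    {n : ℕ} (h : ‖kaczmarzOp lam a n w‖ = ‖w‖) : ∀ i < n, ⟪a i, w⟫ = 0 := by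
  induction n with
  | zero => simp
  | succ n ih =>
    have hn : ‖kaczmarzOp lam a n w‖ = ‖w‖ :=
      le_antisymm (norm_kaczmarzOp_apply_le h₀.le h₂.le n)
        (h ▸ antitone_norm_kaczmarzOp_apply h₀.le h₂.le n.le_succ)
    have hfix : kaczmarzOp lam a n w = w := kaczmarzOp_apply_of_forall_inner_eq_zero (ih hn)
    rw [kaczmarzOp_succ_apply, hfix] at h
    intro i hi
    rcases Nat.lt_succ_iff_lt_or_eq.mp hi with hi | rfl
    · exact ih hn i hi
    · exact inner_eq_zero_of_norm_relaxedProj_apply_eq h₀ h₂ h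

theorem norm_kaczmarzOp_period_apply_lt {M : ℕ} (hM : 0 < M) (ha : Function.Periodic a M)
    (h₀ : 0 < lam) (h₂ : lam < 2) (hw : w ∈ Submodule.span ℝ (range a)) (hw₀ : w ≠ 0) :
    ‖kaczmarzOp lam a M w‖ < ‖w‖ := by
  refine (norm_kaczmarzOp_apply_le h₀.le h₂.le M).lt_of_ne fun h => hw₀ ?_
  have horth : ∀ i, ⟪a i, w⟫ = 0 := fun i =>
    ha.map_mod_nat i ▸
      forall_inner_eq_zero_of_norm_kaczmarzOp_apply_eq h₀ h₂ h _ (Nat.mod_lt i hM)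
  exact inner_self_eq_zero.mp (mem_orthogonal_span_range_iff.mpr horth w hw)

theorem tendsto_kaczmarzOp_apply_zero [FiniteDimensional ℝ H] {M : ℕ} (hM : 0 < M)
    (ha : Function.Periodic a M) (h₀ : 0 < lam) (h₂ : lam < 2)
    (hw : w ∈ Submodule.span ℝ (range a)) :
    Tendsto (fun n => kaczmarzOp lam a n w) atTop (𝓝 0) := by
  set V := Submodule.span ℝ (range a)
  set T : V →L[ℝ] H := (kaczmarzOp lam a M).comp V.subtypeL
  have hT : ‖T‖ < 1 := T.opNorm_lt_one_of_norm_apply_lt fun v hv =>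
    norm_kaczmarzOp_period_apply_lt hM ha h₀ h₂ v.2 (by simpa using hv)
  have hcycles : ∀ k, ∀ v ∈ V, ‖kaczmarzOp lam a (k * M) v‖ ≤ ‖T‖ ^ k * ‖v‖ := by
    intro k
    induction k with
    | zero => simp [kaczmarzOp_zero_apply]
    | succ k ih =>
      intro v hv
      rw [Nat.succ_mul, kaczmarzOp_add_period ha, ContinuousLinearMap.comp_apply]
      calc ‖kaczmarzOp lam a (k * M) (kaczmarzOp lam a M v)‖
          ≤ ‖T‖ ^ k * ‖kaczmarzOp lam a M v‖ := ih _ (kaczmarzOp_apply_mem_span hv M)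
        _ ≤ ‖T‖ ^ k * (‖T‖ * ‖v‖) := by gcongr; exact T.le_opNorm ⟨v, hv⟩
        _ = ‖T‖ ^ (k + 1) * ‖v‖ := by ring
  have hbound : ∀ n, ‖kaczmarzOp lam a n w‖ ≤ ‖T‖ ^ (n / M) * ‖w‖ := fun n =>
    (antitone_norm_kaczmarzOp_apply h₀.le h₂.le (Nat.div_mul_le_self n M)).trans (hcycles _ w hw)
  rw [tendsto_zero_iff_norm_tendsto_zero]
  refine squeeze_zero (fun _ => norm_nonneg _) hbound ?_
  simpa using ((tendsto_pow_atTop_nhds_zero_of_lt_one (norm_nonneg T) hT).comp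
    (Nat.tendsto_div_const_atTop hM.ne')).mul_const ‖w‖

end kaczmarzOp

theorem tendsto_kaczmarz [FiniteDimensional ℝ H] {lam : ℝ} {a : ℕ → H} {β : ℕ → ℝ} {s : H}
    {z : ℕ → H} {M : ℕ} (hM : 0 < M) (ha : Function.Periodic a M) (h₀ : 0 < lam) (h₂ : lam < 2)
    (hs : s ∈ Submodule.span ℝ (range a)) (hsol : ∀ n, ⟪a n, s⟫ = β n)
    (hz₀ : z 0 ∈ Submodule.span ℝ (range a))
    (hz : ∀ n, z (n + 1) = z n + (lam * (β n - ⟪a n, z n⟫) / ‖a n‖ ^ 2) • a n) :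
    Tendsto z atTop (𝓝 s) := by
  have herr : (fun n => z n - s) = fun n => kaczmarzOp lam a n (z 0 - s) := by
    funext n
    induction n with
    | zero => rfl
    | succ n ih =>
      rw [kaczmarzOp_succ_apply, ← ih, relaxedProj_apply, hz, ← hsol, inner_sub_right]
      module
  rw [← tendsto_sub_nhds_zero_iff, herr]
  exact tendsto_kaczmarzOp_apply_zero hM ha h₀ h₂ (Submodule.sub_mem _ hz₀ hs)

end InnerProductSpace

abbrev AugmentedSpace (M N : ℕ) :=
  WithLp 2 (EuclideanSpace ℝ (Fin M) × EuclideanSpace ℝ (Fin N))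

noncomputable def tikhonov {M N : ℕ} (A : Matrix (Fin M) (Fin N) ℝ) (σ : ℝ)
    (b : EuclideanSpace ℝ (Fin M)) (y : EuclideanSpace ℝ (Fin N)) : ℝ :=
  σ ^ 2 * ‖b - mulVecE A y‖ ^ 2 + ‖y‖ ^ 2

noncomputable def augmentedRow {M N : ℕ} (A : Matrix (Fin M) (Fin N) ℝ) (σ : ℝ) (i : Fin M) :
    AugmentedSpace M N :=
  WithLp.toLp 2 (EuclideanSpace.single i 1, σ • rowE A i)

noncomputable def augmentedPoint {M N : ℕ} (A : Matrix (Fin M) (Fin N) ℝ) (σ : ℝ)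
    (b : EuclideanSpace ℝ (Fin M)) (y : EuclideanSpace ℝ (Fin N)) : AugmentedSpace M N :=
  WithLp.toLp 2 (σ • (b - mulVecE A y), y)

section augmented
variable {M N : ℕ} {A : Matrix (Fin M) (Fin N) ℝ} {σ : ℝ} {b : EuclideanSpace ℝ (Fin M)}

theorem mulVecE_apply (y : EuclideanSpace ℝ (Fin N)) (i : Fin M) :
    mulVecE A y i = ∑ k, A i k * y k := rfl

theorem inner_augmentedRow (i : Fin M) (z : AugmentedSpace M N) :
    ⟪augmentedRow A σ i, z⟫ = z.fst i + σ * mulVecE A z.snd i := by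
  simp [augmentedRow, rowE, mulVecE_apply, PiLp.inner_apply, Finset.mul_sum, mul_comm,
    mul_assoc]

theorem norm_augmentedRow_sq (i : Fin M) :
    ‖augmentedRow A σ i‖ ^ 2 = 1 + σ ^ 2 * ‖rowE A i‖ ^ 2 := by
  rw [augmentedRow, WithLp.prod_norm_sq_eq_of_L2]
  simp [norm_smul, mul_pow]

theorem inner_augmentedRow_augmentedPoint (i : Fin M) (y : EuclideanSpace ℝ (Fin N)) :
    ⟪augmentedRow A σ i, augmentedPoint A σ b y⟫ = σ * b i := by
  rw [inner_augmentedRow]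
  simp only [augmentedPoint, WithLp.toLp_fst, WithLp.toLp_snd, PiLp.smul_apply, PiLp.sub_apply,
    smul_eq_mul]
  ring

theorem norm_augmentedPoint_sq (y : EuclideanSpace ℝ (Fin N)) :
    ‖augmentedPoint A σ b y‖ ^ 2 = tikhonov A σ b y := by
  rw [augmentedPoint, WithLp.prod_norm_sq_eq_of_L2]
  simp [tikhonov, norm_smul, mul_pow]

theorem eq_augmentedPoint_snd {z : AugmentedSpace M N}
    (h : ∀ i, ⟪augmentedRow A σ i, z⟫ = σ * b i) : z = augmentedPoint A σ b z.snd := by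
  have hfst : z.fst = σ • (b - mulVecE A z.snd) := by
    ext i
    have := h i
    rw [inner_augmentedRow] at this
    simp only [PiLp.smul_apply, PiLp.sub_apply, smul_eq_mul]
    linarith
  rw [augmentedPoint, ← hfst]
  rfl

theorem tikhonov_eq_add_norm_sq {s : AugmentedSpace M N}
    (hs : s ∈ Submodule.span ℝ (range (augmentedRow A σ)))
    (hsol : ∀ i, ⟪augmentedRow A σ i, s⟫ = σ * b i) (y : EuclideanSpace ℝ (Fin N)) :
    tikhonov A σ b y = tikhonov A σ b s.snd + ‖augmentedPoint A σ b y - s‖ ^ 2 := by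
  rw [← norm_augmentedPoint_sq, ← norm_augmentedPoint_sq, ← eq_augmentedPoint_snd hsol]
  exact norm_sq_eq_of_forall_inner_eq hs fun i => by
    rw [inner_augmentedRow_augmentedPoint, hsol]

theorem art_step_eq_kaczmarz_step {i : Fin M} {u u' : EuclideanSpace ℝ (Fin M)}
    {x x' : EuclideanSpace ℝ (Fin N)} {γ lam : ℝ}
    (hγ : γ = lam * (σ * (b i - ∑ k, A i k * x k) - u i) / (1 + σ ^ 2 * ‖rowE A i‖ ^ 2))
    (hu : u' = u + γ • EuclideanSpace.single i 1) (hx : x' = x + (σ * γ) • rowE A i) :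
    (WithLp.toLp 2 (u', x') : AugmentedSpace M N) = WithLp.toLp 2 (u, x) +
      (lam * (σ * b i - ⟪augmentedRow A σ i, WithLp.toLp 2 (u, x)⟫) /
        ‖augmentedRow A σ i‖ ^ 2) • augmentedRow A σ i := by
  have hγ' : lam * (σ * b i - ⟪augmentedRow A σ i, WithLp.toLp 2 (u, x)⟫) /
      ‖augmentedRow A σ i‖ ^ 2 = γ := by
    rw [hγ, inner_augmentedRow, norm_augmentedRow_sq, mulVecE_apply, WithLp.toLp_fst,
      WithLp.toLp_snd]
    ring
  rw [hγ', hu, hx, augmentedRow, mul_comm σ γ, ← smul_smul]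
  rfl

end augmented

theorem stmt_13_general (M N : ℕ)
    (A : Matrix (Fin M) (Fin N) ℝ)
    (b : EuclideanSpace ℝ (Fin M)) (σ : ℝ)
    (lam : ℝ) (hlam₀ : 0 < lam) (hlam₂ : lam < 2)
    (j : ℕ → Fin M) (hj : ∀ n : ℕ, (j n : ℕ) = n % M)
    (u : ℕ → EuclideanSpace ℝ (Fin M)) (x : ℕ → EuclideanSpace ℝ (Fin N))
    (γ : ℕ → ℝ)
    (hγ : ∀ n : ℕ, γ n =
      lam * (σ * (b (j n) - ∑ k, A (j n) k * x n k) - u n (j n)) /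
        (1 + σ ^ 2 * ‖rowE A (j n)‖ ^ 2))
    (hu0 : u 0 = 0) (hx0 : x 0 = 0)
    (hur : ∀ n : ℕ, u (n + 1) = u n + γ n • EuclideanSpace.single (j n) (1 : ℝ))
    (hxr : ∀ n : ℕ, x (n + 1) = x n + (σ * γ n) • rowE A (j n)) :
    ∃ xs : EuclideanSpace ℝ (Fin N),
      (∀ y : EuclideanSpace ℝ (Fin N),
        σ ^ 2 * ‖b - mulVecE A xs‖ ^ 2 + ‖xs‖ ^ 2 ≤
          σ ^ 2 * ‖b - mulVecE A y‖ ^ 2 + ‖y‖ ^ 2) ∧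
      (∀ y : EuclideanSpace ℝ (Fin N),
        (∀ z : EuclideanSpace ℝ (Fin N),
          σ ^ 2 * ‖b - mulVecE A y‖ ^ 2 + ‖y‖ ^ 2 ≤
            σ ^ 2 * ‖b - mulVecE A z‖ ^ 2 + ‖z‖ ^ 2) → y = xs) ∧
      Filter.Tendsto x Filter.atTop (nhds xs) := by
  have hj_surj : Function.Surjective j := fun i =>
    ⟨i, Fin.ext (by rw [hj, Nat.mod_eq_of_lt i.isLt])⟩
  have hj_period : Function.Periodic (augmentedRow A σ ∘ j) M := fun n =>
    congrArg (augmentedRow A σ) (Fin.ext (by rw [hj, hj, Nat.add_mod_right]))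
  obtain ⟨s, hs, hsol⟩ :=
    exists_mem_span_forall_inner_eq (augmentedRow A σ) (augmentedPoint A σ b 0)
  simp only [inner_augmentedRow_augmentedPoint] at hsol
  have hs' : s ∈ Submodule.span ℝ (range (augmentedRow A σ ∘ j)) := by
    rwa [hj_surj.range_comp]
  have hconv : Tendsto (fun n => (WithLp.toLp 2 (u n, x n) : AugmentedSpace M N)) atTop (𝓝 s) :=
    tendsto_kaczmarz (j 0).pos hj_period hlam₀ hlam₂ hs' (fun n => hsol (j n))
      (by rw [hu0, hx0]; exact Submodule.zero_mem _)
      fun n => art_step_eq_kaczmarz_step (hγ n) (hur n) (hxr n)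
  refine ⟨s.snd, fun y => ?_, fun y hy => ?_,
    ((WithLp.continuous_snd 2 _ _).tendsto s).comp hconv⟩
  · show tikhonov A σ b s.snd ≤ tikhonov A σ b y
    rw [tikhonov_eq_add_norm_sq hs hsol y]
    exact le_add_of_nonneg_right (sq_nonneg _)
  · have hle : tikhonov A σ b y ≤ tikhonov A σ b s.snd := hy s.snd
    rw [tikhonov_eq_add_norm_sq hs hsol y] at hle
    have hys : augmentedPoint A σ b y = s := by
      rw [← sub_eq_zero, ← norm_eq_zero, ← sq_eq_zero_iff]
      linarith [sq_nonneg ‖augmentedPoint A σ b y - s‖]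
    exact congrArg WithLp.snd hys

/-- Convergence of the regularizing cyclic ART variant: with nonzero rows `a_j` of `A`,
`σ > 0`, `0 < λ < 2`, starting from `u⁽⁰⁾ = 0`, `x⁽⁰⁾ = 0` and cycling through the rows
(`jₙ = (n mod M) + 1` in 1-based indexing) with the updates
`u⁽ⁿ⁺¹⁾ = u⁽ⁿ⁾ + γₙ e_{jₙ}`, `x⁽ⁿ⁺¹⁾ = x⁽ⁿ⁾ + σ γₙ a_{jₙ}`, where
`γₙ = λ (σ (b_{jₙ} − a_{jₙ}ᵀ x⁽ⁿ⁾) − u⁽ⁿ⁾_{jₙ}) / (1 + σ² ‖a_{jₙ}‖²)`, the sequence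
`(x⁽ⁿ⁾)` converges to the unique minimizer of `x ↦ σ²‖b − A x‖² + ‖x‖²`. -/
theorem stmt_13 (M N : ℕ) (hM : 0 < M)
    (A : Matrix (Fin M) (Fin N) ℝ) (hrows : ∀ i : Fin M, A i ≠ 0)
    (b : EuclideanSpace ℝ (Fin M)) (σ : ℝ) (hσ : 0 < σ)
    (lam : ℝ) (hlam₀ : 0 < lam) (hlam₂ : lam < 2)
    (j : ℕ → Fin M) (hj : ∀ n : ℕ, (j n : ℕ) = n % M)
    (u : ℕ → EuclideanSpace ℝ (Fin M)) (x : ℕ → EuclideanSpace ℝ (Fin N))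
    (γ : ℕ → ℝ)
    (hγ : ∀ n : ℕ, γ n =
      lam * (σ * (b (j n) - ∑ k, A (j n) k * x n k) - u n (j n)) /
        (1 + σ ^ 2 * ‖rowE A (j n)‖ ^ 2))
    (hu0 : u 0 = 0) (hx0 : x 0 = 0)
    (hur : ∀ n : ℕ, u (n + 1) = u n + γ n • EuclideanSpace.single (j n) (1 : ℝ))
    (hxr : ∀ n : ℕ, x (n + 1) = x n + (σ * γ n) • rowE A (j n)) :
    ∃ xs : EuclideanSpace ℝ (Fin N),
      (∀ y : EuclideanSpace ℝ (Fin N),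
        σ ^ 2 * ‖b - mulVecE A xs‖ ^ 2 + ‖xs‖ ^ 2 ≤
          σ ^ 2 * ‖b - mulVecE A y‖ ^ 2 + ‖y‖ ^ 2) ∧
      (∀ y : EuclideanSpace ℝ (Fin N),
        (∀ z : EuclideanSpace ℝ (Fin N),
          σ ^ 2 * ‖b - mulVecE A y‖ ^ 2 + ‖y‖ ^ 2 ≤
            σ ^ 2 * ‖b - mulVecE A z‖ ^ 2 + ‖z‖ ^ 2) → y = xs) ∧
      Filter.Tendsto x Filter.atTop (nhds xs) :=
  stmt_13_general M N A b σ lam hlam₀ hlam₂ j hj u x γ hγ hu0 hx0 hur hxr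
end
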